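/- arXiv:2101.09155 — 12 statements merged into one kernel-verified Lean document; each statement's English description precedes it below -/
import Mathlib

section
/- Let φ : ℝ → ℝ be three times continuously differentiable on an open interval containing [m,M] with φ''' ≥ 0 there (φ is 3-convex). Suppose φ∘f ∈ L and the function t ↦ (M − f(t))·(f(t) − m) belongs to L. Then, writing Δ = (φ(M) − φ(m))/(M − m) and K = A((M·1 − f)·(f − m·1))/(M − m), one has K·(Δ − φ'(m)) ≤ (M − A(f))/(M − m)·φ(m) + (A(f) − m)/(M − m)·φ(M) − A(φ∘f) ≤ K·(φ'(M) − Δ). -/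
/-!
For `x ∈ [m, M]` let `g(x) = (M - x) φ(m) + (x - m) φ(M) - (M - m) φ(x) - (M - x)(x - m)(Δ - φ'(m))`.
Then `g(m) = g(M) = g'(m) = 0` and `g'' = 2(Δ - φ'(m)) - (M - m) φ''` is antitone since `φ''' ≥ 0`;
such a function is nonnegative on `[m, M]` (at an interior negative minimum `g'` would vanish,
Rolle would give a zero of `g''` to its left, and then `g` would decrease down to `g(M) < 0`).
The upper bound is this lower bound for `x ↦ -φ(m + M - x)`. Both pointwise bounds are affine
in `1`, `f`, `φ ∘ f` and `(M - f)(f - m)`, so the positive normalized functional `A` preserves them.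
-/

open Set

theorem nonneg_of_antitoneOn_deriv_deriv {g g' g'' : ℝ → ℝ} {a b : ℝ}
    (hg : ∀ x ∈ Icc a b, HasDerivAt g (g' x) x) (hg' : ∀ x ∈ Icc a b, HasDerivAt g' (g'' x) x)
    (hg'' : AntitoneOn g'' (Icc a b)) (hga : g a = 0) (hgb : g b = 0) (hg'a : g' a = 0)
    {x : ℝ} (hx : x ∈ Icc a b) : 0 ≤ g x := by
  by_contra! hneg
  have hcont : ContinuousOn g (Icc a b) := fun y hy => (hg y hy).continuousAt.continuousWithinAt
  obtain ⟨x₀, hx₀, hmin⟩ := isCompact_Icc.exists_isMinOn ⟨x, hx⟩ hcont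
  have hgx₀ : g x₀ < 0 := (hmin hx).trans_lt hneg
  have hax₀ : a < x₀ := hx₀.1.lt_of_ne (by rintro rfl; linarith)
  have hx₀b : x₀ < b := hx₀.2.lt_of_ne (by rintro rfl; linarith)
  have hg'x₀ : g' x₀ = 0 :=
    (hmin.isLocalMin (Icc_mem_nhds hax₀ hx₀b)).hasDerivAt_eq_zero (hg x₀ hx₀)
  obtain ⟨η, hη, hg''η⟩ := exists_hasDerivAt_eq_zero hax₀
    (fun y hy => (hg' y ⟨hy.1, hy.2.trans hx₀.2⟩).continuousAt.continuousWithinAt)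
    (hg'a.trans hg'x₀.symm) (fun y hy => hg' y ⟨hy.1.le, hy.2.le.trans hx₀.2⟩)
  have hright : Icc x₀ b ⊆ Icc a b := Icc_subset_Icc hx₀.1 le_rfl
  have hg'_anti : AntitoneOn g' (Icc x₀ b) := by
    refine antitoneOn_of_hasDerivWithinAt_nonpos (convex_Icc x₀ b)
      (fun y hy => (hg' y (hright hy)).continuousAt.continuousWithinAt)
      (fun y hy => (hg' y (hright (interior_subset hy))).hasDerivWithinAt) fun y hy => ?_
    rw [interior_Icc] at hy
    exact hg''η ▸ hg'' ⟨hη.1.le, hη.2.le.trans hx₀.2⟩ (hright (Ioo_subset_Icc_self hy))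
      (hη.2.trans hy.1).le
  have hg_anti : AntitoneOn g (Icc x₀ b) := by
    refine antitoneOn_of_hasDerivWithinAt_nonpos (convex_Icc x₀ b) (hcont.mono hright)
      (fun y hy => (hg y (hright (interior_subset hy))).hasDerivWithinAt) fun y hy => ?_
    rw [interior_Icc] at hy
    exact hg'x₀ ▸ hg'_anti (left_mem_Icc.2 hx₀b.le) (Ioo_subset_Icc_self hy) hy.1.le
  have := hg_anti (left_mem_Icc.2 hx₀b.le) (right_mem_Icc.2 hx₀b.le) hx₀b.le
  linarith

theorem mul_slope_sub_deriv_le_chord_sub {φ φ' φ'' : ℝ → ℝ} {m M x : ℝ} (hmM : m < M)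
    (hφ : ∀ y ∈ Icc m M, HasDerivAt φ (φ' y) y) (hφ' : ∀ y ∈ Icc m M, HasDerivAt φ' (φ'' y) y)
    (hφ'' : MonotoneOn φ'' (Icc m M)) (hx : x ∈ Icc m M) :
    (M - x) * (x - m) * ((φ M - φ m) / (M - m) - φ' m)
      ≤ (M - x) * φ m + (x - m) * φ M - (M - m) * φ x := by
  set c := (φ M - φ m) / (M - m) - φ' m with hc
  have hid : ∀ y : ℝ, HasDerivAt (fun y => y) 1 y := hasDerivAt_id'
  have key := nonneg_of_antitoneOn_deriv_deriv
    (g := fun y => (M - y) * φ m + (y - m) * φ M - (M - m) * φ y - (M - y) * (y - m) * c)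
    (g' := fun y => φ M - φ m - (M - m) * φ' y - (M + m - 2 * y) * c)
    (g'' := fun y => 2 * c - (M - m) * φ'' y)
    (fun y hy => (((((hid y).const_sub M).mul_const (φ m)).add
        (((hid y).sub_const m).mul_const (φ M))).sub ((hφ y hy).const_mul (M - m))).sub
        ((((hid y).const_sub M).mul ((hid y).sub_const m)).mul_const c) |>.congr_deriv (by ring))
    (fun y hy => ((hasDerivAt_const y (φ M - φ m)).sub ((hφ' y hy).const_mul (M - m))).sub
        ((((hid y).const_mul 2).const_sub (M + m)).mul_const c) |>.congr_deriv (by ring))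
    (fun y hy z hz hyz =>
      sub_le_sub_left (mul_le_mul_of_nonneg_left (hφ'' hy hz hyz) (sub_nonneg.2 hmM.le)) _)
    (by ring) (by ring) (by rw [hc]; field_simp [sub_ne_zero.2 hmM.ne']; ring) hx
  linarith

theorem chord_sub_le_mul_deriv_sub_slope {φ φ' φ'' : ℝ → ℝ} {m M x : ℝ} (hmM : m < M)
    (hφ : ∀ y ∈ Icc m M, HasDerivAt φ (φ' y) y) (hφ' : ∀ y ∈ Icc m M, HasDerivAt φ' (φ'' y) y)
    (hφ'' : MonotoneOn φ'' (Icc m M)) (hx : x ∈ Icc m M) :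
    (M - x) * φ m + (x - m) * φ M - (M - m) * φ x
      ≤ (M - x) * (x - m) * (φ' M - (φ M - φ m) / (M - m)) := by
  have hrefl : ∀ y ∈ Icc m M, m + M - y ∈ Icc m M := fun y hy =>
    ⟨by linarith [hy.2], by linarith [hy.1]⟩
  have hrefl' : ∀ y, HasDerivAt (fun y => m + M - y) (-1) y := fun y => by
    simpa using (hasDerivAt_id' y).const_sub (m + M)
  have key := mul_slope_sub_deriv_le_chord_sub (φ := fun y => -φ (m + M - y))
    (φ' := fun y => φ' (m + M - y)) (φ'' := fun y => -φ'' (m + M - y)) hmM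
    (fun y hy => ((hφ _ (hrefl y hy)).comp y (hrefl' y)).neg.congr_deriv (by ring))
    (fun y hy => ((hφ' _ (hrefl y hy)).comp y (hrefl' y)).congr_deriv (by ring))
    (fun y hy z hz hyz => neg_le_neg (hφ'' (hrefl z hz) (hrefl y hy) (by linarith)))
    (hrefl x hx)
  simp only [add_sub_cancel_left, add_sub_cancel_right, sub_sub_cancel] at key
  linear_combination key

theorem ContDiffOn.hasDerivAt_deriv_of_isOpen {f : ℝ → ℝ} {s : Set ℝ} {n : WithTop ℕ∞}
    (hf : ContDiffOn ℝ n f s) (hs : IsOpen s) (hn : n ≠ 0) {x : ℝ} (hx : x ∈ s) :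
    HasDerivAt f (deriv f x) x :=
  ((hf.differentiableOn hn x hx).differentiableAt (hs.mem_nhds hx)).hasDerivAt

theorem monotoneOn_deriv_deriv_of_iteratedDeriv_three_nonneg {φ : ℝ → ℝ} {s : Set ℝ}
    (hs : IsOpen s) (hs' : Convex ℝ s) (hφ : ContDiffOn ℝ 3 φ s)
    (hφ3 : ∀ x ∈ s, 0 ≤ iteratedDeriv 3 φ x) : MonotoneOn (deriv (deriv φ)) s := by
  have hφ'' : ContDiffOn ℝ 1 (deriv (deriv φ)) s :=
    (hφ.deriv_of_isOpen (m := 2) hs (by norm_num)).deriv_of_isOpen hs (by norm_num)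
  refine monotoneOn_of_deriv_nonneg hs' hφ''.continuousOn
    (hs.interior_eq.symm ▸ hφ''.differentiableOn one_ne_zero) fun x hx => ?_
  simpa [iteratedDeriv_eq_iterate, hs.interior_eq] using hφ3 x (hs.interior_eq ▸ hx)

theorem map_le_map_of_forall_le {E : Type*} {L : Submodule ℝ (E → ℝ)} {A : L →ₗ[ℝ] ℝ}
    (hApos : ∀ g : L, (∀ t : E, 0 ≤ g.1 t) → 0 ≤ A g) {g h : L} (hgh : ∀ t, g.1 t ≤ h.1 t) :
    A g ≤ A h := by
  simpa using hApos (h - g) fun t => by simpa using hgh t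

theorem elr_three_convex_tm1_general {E : Type*} (L : Submodule ℝ (E → ℝ))
    (h1L : (fun _ : E => (1 : ℝ)) ∈ L)
    (A : L →ₗ[ℝ] ℝ)
    (hApos : ∀ g : L, (∀ t : E, 0 ≤ g.1 t) → 0 ≤ A g)
    (hAnorm : A ⟨fun _ => 1, h1L⟩ = 1)
    (m M : ℝ) (hmM : m < M)
    (f : E → ℝ) (hfL : f ∈ L) (hfm : ∀ t, m ≤ f t) (hfM : ∀ t, f t ≤ M)
    (φ : ℝ → ℝ) (a b : ℝ) (ham : a < m) (hMb : M < b)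
    (hφ : ContDiffOn ℝ 3 φ (Set.Ioo a b))
    (hφ3 : ∀ x ∈ Set.Ioo a b, 0 ≤ iteratedDeriv 3 φ x)
    (hφfL : (fun t => φ (f t)) ∈ L)
    (hKL : (fun t => (M - f t) * (f t - m)) ∈ L) :
    let Δ := (φ M - φ m) / (M - m)
    let K := A ⟨fun t => (M - f t) * (f t - m), hKL⟩ / (M - m)
    K * (Δ - deriv φ m)
        ≤ (M - A ⟨f, hfL⟩) / (M - m) * φ m + (A ⟨f, hfL⟩ - m) / (M - m) * φ M
            - A ⟨fun t => φ (f t), hφfL⟩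
      ∧ (M - A ⟨f, hfL⟩) / (M - m) * φ m + (A ⟨f, hfL⟩ - m) / (M - m) * φ M
            - A ⟨fun t => φ (f t), hφfL⟩
        ≤ K * (deriv φ M - Δ) := by
  intro Δ K
  have hsub : Icc m M ⊆ Ioo a b := Icc_subset_Ioo ham hMb
  have hφ' (y) (hy : y ∈ Icc m M) :=
    hφ.hasDerivAt_deriv_of_isOpen isOpen_Ioo (by norm_num) (hsub hy)
  have hφ'' (y) (hy : y ∈ Icc m M) := (hφ.deriv_of_isOpen (m := 2) isOpen_Ioo (by norm_num)
    ).hasDerivAt_deriv_of_isOpen isOpen_Ioo (by norm_num) (hsub hy)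
  have hmono := (monotoneOn_deriv_deriv_of_iteratedDeriv_three_nonneg isOpen_Ioo (convex_Ioo a b)
    hφ hφ3).mono hsub
  set one : L := ⟨fun _ => 1, h1L⟩
  set F : L := ⟨f, hfL⟩
  set Q : L := ⟨fun t => (M - f t) * (f t - m), hKL⟩
  set Φ : L := ⟨fun t => φ (f t), hφfL⟩
  set G : L := φ m • (M • one - F) + φ M • (F - m • one) - (M - m) • Φ
  have hG : ∀ t, G.1 t = (M - f t) * φ m + (f t - m) * φ M - (M - m) * φ (f t) := fun t => by
    simp only [G, one, F, Φ, AddSubgroupClass.coe_sub, Submodule.coe_add, SetLike.val_smul,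
      Pi.sub_apply, Pi.add_apply, Pi.smul_apply, smul_eq_mul]
    ring
  have hmid : (M - A F) / (M - m) * φ m + (A F - m) / (M - m) * φ M - A Φ = A G / (M - m) := by
    simp only [G, map_sub, map_add, map_smul, smul_eq_mul, hAnorm]
    field_simp [sub_ne_zero.2 hmM.ne']
  have hK : ∀ c, K * c = A (c • Q) / (M - m) := fun c => by
    rw [map_smul, smul_eq_mul]; ring
  constructor
  · rw [hK, hmid]
    gcongr
    refine map_le_map_of_forall_le hApos fun t => ?_
    simpa [hG, Q, mul_comm] using
      mul_slope_sub_deriv_le_chord_sub hmM hφ' hφ'' hmono ⟨hfm t, hfM t⟩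
  · rw [hK, hmid]
    gcongr
    refine map_le_map_of_forall_le hApos fun t => ?_
    simpa [hG, Q, mul_comm] using
      chord_sub_le_mul_deriv_sub_slope hmM hφ' hφ'' hmono ⟨hfm t, hfM t⟩

/-- Edmundson–Lah–Ribarič type inequality for 3-convex functions
(Theorem 2.1 of the paper). -/
theorem elr_three_convex_tm1 {E : Type*} [Nonempty E] (L : Submodule ℝ (E → ℝ))
    (h1L : (fun _ : E => (1 : ℝ)) ∈ L)
    (A : L →ₗ[ℝ] ℝ)
    (hApos : ∀ g : L, (∀ t : E, 0 ≤ g.1 t) → 0 ≤ A g)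
    (hAnorm : A ⟨fun _ => 1, h1L⟩ = 1)
    (m M : ℝ) (hmM : m < M)
    (f : E → ℝ) (hfL : f ∈ L) (hfm : ∀ t, m ≤ f t) (hfM : ∀ t, f t ≤ M)
    (φ : ℝ → ℝ) (a b : ℝ) (ham : a < m) (hMb : M < b)
    (hφ : ContDiffOn ℝ 3 φ (Set.Ioo a b))
    (hφ3 : ∀ x ∈ Set.Ioo a b, 0 ≤ iteratedDeriv 3 φ x)
    (hφfL : (fun t => φ (f t)) ∈ L)
    (hKL : (fun t => (M - f t) * (f t - m)) ∈ L) :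
    let Δ := (φ M - φ m) / (M - m)
    let K := A ⟨fun t => (M - f t) * (f t - m), hKL⟩ / (M - m)
    K * (Δ - deriv φ m)
        ≤ (M - A ⟨f, hfL⟩) / (M - m) * φ m + (A ⟨f, hfL⟩ - m) / (M - m) * φ M
            - A ⟨fun t => φ (f t), hφfL⟩
      ∧ (M - A ⟨f, hfL⟩) / (M - m) * φ m + (A ⟨f, hfL⟩ - m) / (M - m) * φ M
            - A ⟨fun t => φ (f t), hφfL⟩
        ≤ K * (deriv φ M - Δ) :=
  elr_three_convex_tm1_general L h1L A hApos hAnorm m M hmM f hfL hfm hfM φ a b ham hMb hφ hφ3 hφfL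
    hKL
end

section
/- Let φ : ℝ → ℝ be three times continuously differentiable on an open interval containing [m,M] with φ''' ≥ 0 there (φ is 3-convex). Suppose φ∘f ∈ L and the functions t ↦ (M − f(t))² and t ↦ (f(t) − m)² belong to L. Then, writing Δ = (φ(M) − φ(m))/(M − m), one has (M − A(f))·[φ'(M) − Δ] − (φ''(M)/2)·A((M·1 − f)²) ≤ (M − A(f))/(M − m)·φ(m) + (A(f) − m)/(M − m)·φ(M) − A(φ∘f) ≤ (A(f) − m)·[Δ − φ'(m)] − (φ''(m)/2)·A((f − m·1)²). -/
/-!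
Both bounds are second-order Taylor estimates in disguise. Since the chord of `φ` through `m` and
`M` equals `φ M - (M - x) Δ = φ m + (x - m) Δ`, the left inequality reads `A (φ ∘ f) ≤ A (T_M ∘ f)`
and the right one `A (T_m ∘ f) ≤ A (φ ∘ f)`, where `T_y` is the Taylor polynomial of degree two of
`φ` at `y`. Pointwise, `φ x - T_y x = φ''' ξ (x - y) ^ 3 / 6` has the sign of `x - y`, and `f`
takes values below `M` and above `m`. As `T_y ∘ f` is a combination of `1`, `f` and
`(f - y) ^ 2`, positivity, linearity and `A 1 = 1` carry the pointwise bounds over to `A`.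
-/

open Set

theorem taylorWithinEval_two_uIcc_eq {φ : ℝ → ℝ} {x y : ℝ} (hxy : y ≠ x)
    (hφ : ContDiffAt ℝ 2 φ y) :
    taylorWithinEval φ 2 (uIcc y x) y x
      = φ y + deriv φ y * (x - y) + iteratedDeriv 2 φ y / 2 * (x - y) ^ 2 := by
  have hderiv (k : ℕ) (hk : k ≤ 2) : iteratedDerivWithin k φ (uIcc y x) y = iteratedDeriv k φ y :=
    iteratedDerivWithin_eq_iteratedDeriv (uniqueDiffOn_uIcc hxy) (hφ.of_le (by exact_mod_cast hk))
      left_mem_uIcc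
  simp only [taylor_within_apply, Finset.sum_range_succ, Finset.sum_range_zero,
    hderiv 0 (by norm_num), hderiv 1 (by norm_num), hderiv 2 le_rfl, iteratedDeriv_zero,
    iteratedDeriv_one, smul_eq_mul]
  norm_num
  ring

theorem exists_sub_taylor_two_eq {φ : ℝ → ℝ} {U : Set ℝ} (hU : IsOpen U)
    (hφ : ContDiffOn ℝ 3 φ U) {x y : ℝ} (hxy : uIcc y x ⊆ U) :
    ∃ ξ ∈ uIcc y x, φ x - (φ y + deriv φ y * (x - y) + iteratedDeriv 2 φ y / 2 * (x - y) ^ 2)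
      = iteratedDeriv 3 φ ξ * (x - y) ^ 3 / 6 := by
  rcases eq_or_ne y x with rfl | hne
  · exact ⟨y, left_mem_uIcc, by ring⟩
  obtain ⟨ξ, hξ, hrem⟩ := taylor_mean_remainder_lagrange_iteratedDeriv (n := 2) hne (hφ.mono hxy)
  refine ⟨ξ, uIoo_subset_uIcc_self hξ, ?_⟩
  rw [← taylorWithinEval_two_uIcc_eq hne
    ((hφ.contDiffAt (hU.mem_nhds (hxy left_mem_uIcc))).of_le (by norm_num)), hrem]
  norm_num [Nat.factorial]

section ThreeConvex

variable {φ : ℝ → ℝ} {U : Set ℝ} {x y : ℝ}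

theorem taylor_two_le_of_le (hU : IsOpen U) (hφ : ContDiffOn ℝ 3 φ U) (hxy : uIcc y x ⊆ U)
    (hφ3 : ∀ ξ ∈ uIcc y x, 0 ≤ iteratedDeriv 3 φ ξ) (hle : y ≤ x) :
    φ y + deriv φ y * (x - y) + iteratedDeriv 2 φ y / 2 * (x - y) ^ 2 ≤ φ x := by
  obtain ⟨ξ, hξ, hrem⟩ := exists_sub_taylor_two_eq hU hφ hxy
  have : 0 ≤ iteratedDeriv 3 φ ξ * (x - y) ^ 3 / 6 := by
    have := hφ3 ξ hξ
    have := sub_nonneg.2 hle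
    positivity
  linarith

theorem le_taylor_two_of_le (hU : IsOpen U) (hφ : ContDiffOn ℝ 3 φ U) (hxy : uIcc y x ⊆ U)
    (hφ3 : ∀ ξ ∈ uIcc y x, 0 ≤ iteratedDeriv 3 φ ξ) (hle : x ≤ y) :
    φ x ≤ φ y + deriv φ y * (x - y) + iteratedDeriv 2 φ y / 2 * (x - y) ^ 2 := by
  obtain ⟨ξ, hξ, hrem⟩ := exists_sub_taylor_two_eq hU hφ hxy
  have : iteratedDeriv 3 φ ξ * (x - y) ^ 3 / 6 ≤ 0 :=
    div_nonpos_of_nonpos_of_nonneg (mul_nonpos_of_nonneg_of_nonpos (hφ3 ξ hξ)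
      (Odd.pow_nonpos (by decide) (sub_nonpos.2 hle))) (by norm_num)
  linarith

end ThreeConvex

section PositiveFunctional

variable {E : Type*} {L : Submodule ℝ (E → ℝ)} {A : L →ₗ[ℝ] ℝ}

theorem map_mono_of_nonneg (hApos : ∀ g : L, (∀ t : E, 0 ≤ g.1 t) → 0 ≤ A g) {g h : L}
    (hgh : ∀ t, g.1 t ≤ h.1 t) : A g ≤ A h := by
  have := hApos (h - g) fun t => by simpa using hgh t
  simpa using this

theorem map_le_of_forall_le_affine (hApos : ∀ g : L, (∀ t : E, 0 ≤ g.1 t) → 0 ≤ A g)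
    (h1L : (fun _ : E => (1 : ℝ)) ∈ L) (hAnorm : A ⟨fun _ => 1, h1L⟩ = 1) {p f q : L} {c d e : ℝ}
    (h : ∀ t, p.1 t ≤ c + d * f.1 t + e * q.1 t) : A p ≤ c + d * A f + e * A q := by
  have := map_mono_of_nonneg hApos (h := c • ⟨_, h1L⟩ + d • f + e • q) (by simpa using h)
  simpa only [map_add, map_smul, hAnorm, smul_eq_mul, mul_one] using this

theorem le_map_of_forall_affine_le (hApos : ∀ g : L, (∀ t : E, 0 ≤ g.1 t) → 0 ≤ A g)
    (h1L : (fun _ : E => (1 : ℝ)) ∈ L) (hAnorm : A ⟨fun _ => 1, h1L⟩ = 1) {p f q : L} {c d e : ℝ}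
    (h : ∀ t, c + d * f.1 t + e * q.1 t ≤ p.1 t) : c + d * A f + e * A q ≤ A p := by
  have := map_mono_of_nonneg hApos (g := c • ⟨_, h1L⟩ + d • f + e • q) (by simpa using h)
  simpa only [map_add, map_smul, hAnorm, smul_eq_mul, mul_one] using this

end PositiveFunctional

theorem elr_three_convex_tm3_general {E : Type*} (L : Submodule ℝ (E → ℝ))
    (h1L : (fun _ : E => (1 : ℝ)) ∈ L)
    (A : L →ₗ[ℝ] ℝ)
    (hApos : ∀ g : L, (∀ t : E, 0 ≤ g.1 t) → 0 ≤ A g)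
    (hAnorm : A ⟨fun _ => 1, h1L⟩ = 1)
    (m M : ℝ) (hmM : m < M)
    (f : E → ℝ) (hfL : f ∈ L) (hfm : ∀ t, m ≤ f t) (hfM : ∀ t, f t ≤ M)
    (φ : ℝ → ℝ) (a b : ℝ) (ham : a < m) (hMb : M < b)
    (hφ : ContDiffOn ℝ 3 φ (Set.Ioo a b))
    (hφ3 : ∀ x ∈ Set.Ioo a b, 0 ≤ iteratedDeriv 3 φ x)
    (hφfL : (fun t => φ (f t)) ∈ L)
    (hg1L : (fun t => (M - f t) ^ 2) ∈ L)
    (hg2L : (fun t => (f t - m) ^ 2) ∈ L) :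
    let Δ := (φ M - φ m) / (M - m)
    (M - A ⟨f, hfL⟩) * (deriv φ M - Δ)
          - iteratedDeriv 2 φ M / 2 * A ⟨fun t => (M - f t) ^ 2, hg1L⟩
        ≤ (M - A ⟨f, hfL⟩) / (M - m) * φ m + (A ⟨f, hfL⟩ - m) / (M - m) * φ M
            - A ⟨fun t => φ (f t), hφfL⟩
      ∧ (M - A ⟨f, hfL⟩) / (M - m) * φ m + (A ⟨f, hfL⟩ - m) / (M - m) * φ M
            - A ⟨fun t => φ (f t), hφfL⟩
        ≤ (A ⟨f, hfL⟩ - m) * (Δ - deriv φ m)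
            - iteratedDeriv 2 φ m / 2 * A ⟨fun t => (f t - m) ^ 2, hg2L⟩ := by
  intro Δ
  have hfU (t : E) (y : ℝ) (hy : y ∈ Icc m M) : uIcc y (f t) ⊆ Ioo a b :=
    (uIcc_subset_Icc hy ⟨hfm t, hfM t⟩).trans (Icc_subset_Ioo ham hMb)
  have hM : M ∈ Icc m M := right_mem_Icc.2 hmM.le
  have hm : m ∈ Icc m M := left_mem_Icc.2 hmM.le
  have taylor_M : A ⟨_, hφfL⟩ ≤ φ M - deriv φ M * M + deriv φ M * A ⟨f, hfL⟩
      + iteratedDeriv 2 φ M / 2 * A ⟨_, hg1L⟩ :=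
    map_le_of_forall_le_affine hApos h1L hAnorm fun t => by
      have := le_taylor_two_of_le isOpen_Ioo hφ (hfU t M hM) (fun ξ hξ => hφ3 ξ (hfU t M hM hξ))
        (hfM t)
      rw [sub_sq_comm] at this
      linarith
  have taylor_m : φ m - deriv φ m * m + deriv φ m * A ⟨f, hfL⟩
      + iteratedDeriv 2 φ m / 2 * A ⟨_, hg2L⟩ ≤ A ⟨_, hφfL⟩ :=
    le_map_of_forall_affine_le hApos h1L hAnorm fun t => by
      have := taylor_two_le_of_le isOpen_Ioo hφ (hfU t m hm) (fun ξ hξ => hφ3 ξ (hfU t m hm hξ))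
        (hfm t)
      linarith
  have hMm : M - m ≠ 0 := sub_ne_zero.2 hmM.ne'
  have slope : (M - m) * Δ = φ M - φ m := mul_div_cancel₀ _ hMm
  have chord : (M - A ⟨f, hfL⟩) / (M - m) * φ m + (A ⟨f, hfL⟩ - m) / (M - m) * φ M
      = φ M - (M - A ⟨f, hfL⟩) * Δ := by
    simp only [Δ]
    field_simp
    ring
  constructor <;> linarith

/-- Edmundson–Lah–Ribarič type inequality for 3-convex functions
(Theorem 2.3 of the paper). -/
theorem elr_three_convex_tm3 {E : Type*} [Nonempty E] (L : Submodule ℝ (E → ℝ))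
    (h1L : (fun _ : E => (1 : ℝ)) ∈ L)
    (A : L →ₗ[ℝ] ℝ)
    (hApos : ∀ g : L, (∀ t : E, 0 ≤ g.1 t) → 0 ≤ A g)
    (hAnorm : A ⟨fun _ => 1, h1L⟩ = 1)
    (m M : ℝ) (hmM : m < M)
    (f : E → ℝ) (hfL : f ∈ L) (hfm : ∀ t, m ≤ f t) (hfM : ∀ t, f t ≤ M)
    (φ : ℝ → ℝ) (a b : ℝ) (ham : a < m) (hMb : M < b)
    (hφ : ContDiffOn ℝ 3 φ (Set.Ioo a b))
    (hφ3 : ∀ x ∈ Set.Ioo a b, 0 ≤ iteratedDeriv 3 φ x)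
    (hφfL : (fun t => φ (f t)) ∈ L)
    (hg1L : (fun t => (M - f t) ^ 2) ∈ L)
    (hg2L : (fun t => (f t - m) ^ 2) ∈ L) :
    let Δ := (φ M - φ m) / (M - m)
    (M - A ⟨f, hfL⟩) * (deriv φ M - Δ)
          - iteratedDeriv 2 φ M / 2 * A ⟨fun t => (M - f t) ^ 2, hg1L⟩
        ≤ (M - A ⟨f, hfL⟩) / (M - m) * φ m + (A ⟨f, hfL⟩ - m) / (M - m) * φ M
            - A ⟨fun t => φ (f t), hφfL⟩
      ∧ (M - A ⟨f, hfL⟩) / (M - m) * φ m + (A ⟨f, hfL⟩ - m) / (M - m) * φ M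
            - A ⟨fun t => φ (f t), hφfL⟩
        ≤ (A ⟨f, hfL⟩ - m) * (Δ - deriv φ m)
            - iteratedDeriv 2 φ m / 2 * A ⟨fun t => (f t - m) ^ 2, hg2L⟩ :=
  elr_three_convex_tm3_general L h1L A hApos hAnorm m M hmM f hfL hfm hfM φ a b ham hMb hφ hφ3 hφfL
    hg1L hg2L
end

section
/- Let φ : ℝ → ℝ be three times continuously differentiable on an open interval containing [m,M] with φ''' ≥ 0 there (φ is 3-convex). Suppose φ∘f ∈ L and the functions t ↦ (M − f(t))² and t ↦ (f(t) − m)² belong to L. Then A(f) ∈ [m,M] and, writing Δ = (φ(M) − φ(m))/(M − m), the Jensen-type bounds hold: (M − A(f))·[φ'(M) − Δ − (φ''(M)/2)·(M − A(f))] − (A(f) − m)·[Δ − φ'(m)] + (φ''(m)/2)·A((f − m·1)²) ≤ A(φ∘f) − φ(A(f)) ≤ (A(f) − m)·[Δ − φ'(m) − (φ''(m)/2)·(A(f) − m)] − (M − A(f))·[φ'(M) − Δ] + (φ''(M)/2)·A((M·1 − f)²). -/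
/-!
Since `φ'''` is nonnegative, `φ'` is convex and lies above its tangent lines, so `φ` minus its
second-order Taylor polynomial at `c` has nonnegative derivative and vanishes at `c`. Hence `φ`
lies above that polynomial to the right of `c` and below it to the left. Applying the positive
functional `A` to these bounds at `c = m` and `c = M`, and evaluating them at `A f ∈ [m, M]`,
gives both inequalities once `Δ (M - m) = φ M - φ m` is substituted.
-/

open Set

lemma ConvexOn.add_deriv_mul_sub_le {s : Set ℝ} {g : ℝ → ℝ} (hg : ConvexOn ℝ s g)
    {c y : ℝ} (hc : c ∈ s) (hy : y ∈ s) (hd : DifferentiableAt ℝ g c) :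
    g c + deriv g c * (y - c) ≤ g y := by
  rcases lt_trichotomy y c with hyc | rfl | hcy
  · have := hg.slope_le_deriv hy hc hyc hd
    rw [slope_def_field, div_le_iff₀ (sub_pos.2 hyc)] at this
    linarith
  · simp
  · have := hg.deriv_le_slope hc hy hcy hd
    rw [slope_def_field, le_div_iff₀ (sub_pos.2 hcy)] at this
    linarith

noncomputable def taylorQuad (φ : ℝ → ℝ) (c x : ℝ) : ℝ :=
  φ c + deriv φ c * (x - c) + iteratedDeriv 2 φ c / 2 * (x - c) ^ 2

lemma hasDerivAt_taylorQuad (φ : ℝ → ℝ) (c x : ℝ) :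
    HasDerivAt (taylorQuad φ c) (deriv φ c + iteratedDeriv 2 φ c * (x - c)) x := by
  have hlin : HasDerivAt (fun y : ℝ => y - c) 1 x := (hasDerivAt_id x).sub_const c
  exact (((hlin.const_mul (deriv φ c)).const_add (φ c)).add
    ((hlin.fun_pow 2).const_mul (iteratedDeriv 2 φ c / 2))).congr_deriv (by ring)

@[simp]
lemma taylorQuad_self (φ : ℝ → ℝ) (c : ℝ) : taylorQuad φ c c = φ c := by
  simp [taylorQuad]

section ThreeConvex

variable {φ : ℝ → ℝ} {s : Set ℝ} (hs : IsOpen s) (hsc : Convex ℝ s)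
  (hφ : ContDiffOn ℝ 3 φ s) (hφ3 : ∀ x ∈ s, 0 ≤ iteratedDeriv 3 φ x)
include hs hsc hφ hφ3

lemma convexOn_deriv_of_iteratedDeriv_three_nonneg : ConvexOn ℝ s (deriv φ) := by
  have hφ' : ContDiffOn ℝ 2 (deriv φ) s := hφ.deriv_of_isOpen hs (by norm_num)
  refine convexOn_of_deriv2_nonneg' hsc (hφ'.differentiableOn (by norm_num))
    ((hφ'.deriv_of_isOpen hs (by norm_num) : ContDiffOn ℝ 1 _ s).differentiableOn (by norm_num))
    fun x hx => ?_
  simpa [iteratedDeriv_eq_iterate] using hφ3 x hx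

lemma monotoneOn_sub_taylorQuad {c : ℝ} (hc : c ∈ s) :
    MonotoneOn (fun x => φ x - taylorQuad φ c x) s := by
  have hφd : DifferentiableOn ℝ φ s := hφ.differentiableOn (by norm_num)
  have hφ' : ContDiffOn ℝ 2 (deriv φ) s := hφ.deriv_of_isOpen hs (by norm_num)
  have hderiv : ∀ x ∈ s, HasDerivAt (fun x => φ x - taylorQuad φ c x)
      (deriv φ x - (deriv φ c + iteratedDeriv 2 φ c * (x - c))) x := fun x hx =>
    (hφd.differentiableAt (hs.mem_nhds hx)).hasDerivAt.sub (hasDerivAt_taylorQuad φ c x)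
  refine monotoneOn_of_deriv_nonneg hsc
    (fun x hx => (hderiv x hx).continuousAt.continuousWithinAt)
    (fun x hx => ?_) fun x hx => ?_ <;> rw [hs.interior_eq] at hx
  · exact (hderiv x hx).differentiableAt.differentiableWithinAt
  · have tangent := (convexOn_deriv_of_iteratedDeriv_three_nonneg hs hsc hφ hφ3
      ).add_deriv_mul_sub_le hc hx
      ((hφ'.differentiableOn (by norm_num)).differentiableAt (hs.mem_nhds hc))
    rw [(hderiv x hx).deriv, iteratedDeriv_eq_iterate, Function.iterate_succ_apply,
      Function.iterate_one]
    linarith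

lemma taylorQuad_le {c x : ℝ} (hc : c ∈ s) (hx : x ∈ s) (hcx : c ≤ x) :
    taylorQuad φ c x ≤ φ x := by
  have := monotoneOn_sub_taylorQuad hs hsc hφ hφ3 hc hc hx hcx
  simpa using this

lemma le_taylorQuad {c x : ℝ} (hc : c ∈ s) (hx : x ∈ s) (hxc : x ≤ c) :
    φ x ≤ taylorQuad φ c x := by
  have := monotoneOn_sub_taylorQuad hs hsc hφ hφ3 hc hx hc hxc
  simpa using this

end ThreeConvex

section PositiveFunctional

variable {E : Type*} {L : Submodule ℝ (E → ℝ)} {A : L →ₗ[ℝ] ℝ}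

lemma monotone_of_map_nonneg (hApos : ∀ g : L, (∀ t : E, 0 ≤ g.1 t) → 0 ≤ A g) :
    Monotone A := fun g h hgh => by
  have := hApos (h - g) fun t => sub_nonneg.2 (hgh t)
  rwa [map_sub, sub_nonneg] at this

lemma map_mem_Icc (h1L : (fun _ : E => (1 : ℝ)) ∈ L)
    (hApos : ∀ g : L, (∀ t : E, 0 ≤ g.1 t) → 0 ≤ A g)
    (hAnorm : A ⟨fun _ => 1, h1L⟩ = 1) {m M : ℝ} {f : L} (hf : ∀ t, f.1 t ∈ Icc m M) :
    A f ∈ Icc m M := by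
  have hconst : ∀ c : ℝ, A (c • ⟨fun _ => 1, h1L⟩) = c := fun c => by
    rw [map_smul, hAnorm, smul_eq_mul, mul_one]
  have hA := monotone_of_map_nonneg hApos
  exact ⟨hconst m ▸ hA fun t => by simpa using (hf t).1,
    hconst M ▸ hA fun t => by simpa using (hf t).2⟩

lemma exists_taylorQuad_comp_mem (h1L : (fun _ : E => (1 : ℝ)) ∈ L)
    (hAnorm : A ⟨fun _ => 1, h1L⟩ = 1) (φ : ℝ → ℝ) (c : ℝ) (f q : L)
    (hq : ∀ t, q.1 t = (f.1 t - c) ^ 2) :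
    ∃ T : L, (∀ t, T.1 t = taylorQuad φ c (f.1 t)) ∧
      A T = φ c + deriv φ c * (A f - c) + iteratedDeriv 2 φ c / 2 * A q := by
  set one : L := ⟨fun _ => 1, h1L⟩
  refine ⟨φ c • one + deriv φ c • (f - c • one) + (iteratedDeriv 2 φ c / 2) • q,
    fun t => ?_, ?_⟩
  · simp [one, taylorQuad, hq]
  · simp [hAnorm]

end PositiveFunctional

theorem jensen_three_convex_from_tm3_general {E : Type*} (L : Submodule ℝ (E → ℝ))
    (h1L : (fun _ : E => (1 : ℝ)) ∈ L)
    (A : L →ₗ[ℝ] ℝ)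
    (hApos : ∀ g : L, (∀ t : E, 0 ≤ g.1 t) → 0 ≤ A g)
    (hAnorm : A ⟨fun _ => 1, h1L⟩ = 1)
    (m M : ℝ)
    (f : E → ℝ) (hfL : f ∈ L) (hfm : ∀ t, m ≤ f t) (hfM : ∀ t, f t ≤ M)
    (φ : ℝ → ℝ) (a b : ℝ) (ham : a < m) (hMb : M < b)
    (hφ : ContDiffOn ℝ 3 φ (Set.Ioo a b))
    (hφ3 : ∀ x ∈ Set.Ioo a b, 0 ≤ iteratedDeriv 3 φ x)
    (hφfL : (fun t => φ (f t)) ∈ L)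
    (hg1L : (fun t => (M - f t) ^ 2) ∈ L)
    (hg2L : (fun t => (f t - m) ^ 2) ∈ L) :
    let Δ := (φ M - φ m) / (M - m)
    A ⟨f, hfL⟩ ∈ Set.Icc m M
      ∧ (M - A ⟨f, hfL⟩)
              * (deriv φ M - Δ - iteratedDeriv 2 φ M / 2 * (M - A ⟨f, hfL⟩))
            - (A ⟨f, hfL⟩ - m) * (Δ - deriv φ m)
            + iteratedDeriv 2 φ m / 2 * A ⟨fun t => (f t - m) ^ 2, hg2L⟩
          ≤ A ⟨fun t => φ (f t), hφfL⟩ - φ (A ⟨f, hfL⟩)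
      ∧ A ⟨fun t => φ (f t), hφfL⟩ - φ (A ⟨f, hfL⟩)
          ≤ (A ⟨f, hfL⟩ - m)
                * (Δ - deriv φ m - iteratedDeriv 2 φ m / 2 * (A ⟨f, hfL⟩ - m))
              - (M - A ⟨f, hfL⟩) * (deriv φ M - Δ)
              + iteratedDeriv 2 φ M / 2 * A ⟨fun t => (M - f t) ^ 2, hg1L⟩ := by
  intro Δ
  have hΔ : Δ * (M - m) = φ M - φ m :=
    div_mul_cancel_of_imp fun h => by rw [sub_eq_zero.1 h, sub_self]
  have hA := monotone_of_map_nonneg hApos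
  obtain ⟨hxm, hxM⟩ :=
    map_mem_Icc h1L hApos hAnorm (f := ⟨f, hfL⟩) fun t => ⟨hfm t, hfM t⟩
  have hmem : ∀ {x}, m ≤ x → x ≤ M → x ∈ Ioo a b := fun h1 h2 =>
    ⟨ham.trans_le h1, h2.trans_lt hMb⟩
  have hm := hmem le_rfl (hxm.trans hxM)
  have hM := hmem (hxm.trans hxM) le_rfl
  have taylor_le : ∀ {x}, x ∈ Ioo a b → m ≤ x → taylorQuad φ m x ≤ φ x :=
    taylorQuad_le isOpen_Ioo (convex_Ioo a b) hφ hφ3 hm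
  have le_taylor : ∀ {x}, x ∈ Ioo a b → x ≤ M → φ x ≤ taylorQuad φ M x :=
    le_taylorQuad isOpen_Ioo (convex_Ioo a b) hφ hφ3 hM
  obtain ⟨Tm, hTm, hATm⟩ := exists_taylorQuad_comp_mem h1L hAnorm φ m ⟨f, hfL⟩
    ⟨_, hg2L⟩ fun _ => rfl
  obtain ⟨TM, hTM, hATM⟩ := exists_taylorQuad_comp_mem h1L hAnorm φ M ⟨f, hfL⟩
    ⟨_, hg1L⟩ fun _ => sub_sq_comm _ _
  have hlower : A Tm ≤ A ⟨_, hφfL⟩ :=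
    hA fun t => (hTm t).trans_le (taylor_le (hmem (hfm t) (hfM t)) (hfm t))
  have hupper : A ⟨_, hφfL⟩ ≤ A TM :=
    hA fun t => (le_taylor (hmem (hfm t) (hfM t)) (hfM t)).trans_eq (hTM t).symm
  have hx_lower := taylor_le (hmem hxm hxM) hxm
  have hx_upper := le_taylor (hmem hxm hxM) hxM
  rw [hATm] at hlower
  rw [hATM] at hupper
  unfold taylorQuad at hx_lower hx_upper
  refine ⟨⟨hxm, hxM⟩, ?_, ?_⟩
  · linear_combination hlower + hx_upper - hΔ
  · linear_combination hupper + hx_lower - hΔ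

/-- Jensen type inequality for 3-convex functions derived from Theorem 2.3
(Remark 2.3 (ii) of the paper). -/
theorem jensen_three_convex_from_tm3 {E : Type*} [Nonempty E] (L : Submodule ℝ (E → ℝ))
    (h1L : (fun _ : E => (1 : ℝ)) ∈ L)
    (A : L →ₗ[ℝ] ℝ)
    (hApos : ∀ g : L, (∀ t : E, 0 ≤ g.1 t) → 0 ≤ A g)
    (hAnorm : A ⟨fun _ => 1, h1L⟩ = 1)
    (m M : ℝ) (hmM : m < M)
    (f : E → ℝ) (hfL : f ∈ L) (hfm : ∀ t, m ≤ f t) (hfM : ∀ t, f t ≤ M)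
    (φ : ℝ → ℝ) (a b : ℝ) (ham : a < m) (hMb : M < b)
    (hφ : ContDiffOn ℝ 3 φ (Set.Ioo a b))
    (hφ3 : ∀ x ∈ Set.Ioo a b, 0 ≤ iteratedDeriv 3 φ x)
    (hφfL : (fun t => φ (f t)) ∈ L)
    (hg1L : (fun t => (M - f t) ^ 2) ∈ L)
    (hg2L : (fun t => (f t - m) ^ 2) ∈ L) :
    let Δ := (φ M - φ m) / (M - m)
    A ⟨f, hfL⟩ ∈ Set.Icc m M
      ∧ (M - A ⟨f, hfL⟩)
              * (deriv φ M - Δ - iteratedDeriv 2 φ M / 2 * (M - A ⟨f, hfL⟩))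
            - (A ⟨f, hfL⟩ - m) * (Δ - deriv φ m)
            + iteratedDeriv 2 φ m / 2 * A ⟨fun t => (f t - m) ^ 2, hg2L⟩
          ≤ A ⟨fun t => φ (f t), hφfL⟩ - φ (A ⟨f, hfL⟩)
      ∧ A ⟨fun t => φ (f t), hφfL⟩ - φ (A ⟨f, hfL⟩)
          ≤ (A ⟨f, hfL⟩ - m)
                * (Δ - deriv φ m - iteratedDeriv 2 φ m / 2 * (A ⟨f, hfL⟩ - m))
              - (M - A ⟨f, hfL⟩) * (deriv φ M - Δ)
              + iteratedDeriv 2 φ M / 2 * A ⟨fun t => (M - f t) ^ 2, hg1L⟩ :=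
  jensen_three_convex_from_tm3_general L h1L A hApos hAnorm m M f hfL hfm hfM φ a b ham hMb hφ hφ3
    hφfL hg1L hg2L
end

section
/- Let m < M be real numbers and let φ : ℝ → ℝ be three times continuously differentiable on an open interval containing [m,M] with φ''' ≥ 0 there (φ is 3-convex). Then for every x ∈ (m,M), writing Δ = (φ(M) − φ(m))/(M − m): ((M − x)(x − m)/(M − m))·(Δ − φ'(m)) ≤ (M − x)/(M − m)·φ(m) + (x − m)/(M − m)·φ(M) − φ(x) ≤ ((M − x)(x − m)/(M − m))·(φ'(M) − Δ). -/
/-!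
Clearing denominators, the lower bound says that
`F t = (M - m) * ((M - t) * φ m + (t - m) * φ M - (M - m) * φ t) - c * ((M - t) * (t - m))`,
with `c = φ M - φ m - (M - m) * φ' m`, is nonnegative at `t = x`. Now `F m = F M = 0`, the choice
of `c` makes `F' m = 0`, and `F'` is concave because `φ'` is convex (`φ''' ≥ 0`). By Rolle `F'`
vanishes at some `ξ ∈ (m, M)`; a concave function vanishing at `m` and `ξ` is `≥ 0` on `[m, ξ]`
and `≤ 0` on `[ξ, M]`, so `F` increases from `0` and then decreases to `0`. The upper bound is the
lower bound for the reflected function `t ↦ -φ (-t)`, whose derivative `t ↦ φ' (-t)` is again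
convex.
-/

open Set

theorem nonneg_of_concaveOn_deriv {F F' : ℝ → ℝ} {m M x : ℝ} (hmM : m < M)
    (hF : ∀ t ∈ Icc m M, HasDerivAt F (F' t) t) (hF' : ConcaveOn ℝ (Icc m M) F')
    (hFm : F m = 0) (hFM : F M = 0) (hF'm : F' m = 0) (hx : x ∈ Icc m M) : 0 ≤ F x := by
  have hFc : ContinuousOn F (Icc m M) := fun t ht ↦ (hF t ht).continuousAt.continuousWithinAt
  obtain ⟨ξ, ⟨hmξ, hξM⟩, hF'ξ⟩ := exists_hasDerivAt_eq_zero hmM hFc (hFm.trans hFM.symm)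
    fun t ht ↦ hF t (Ioo_subset_Icc_self ht)
  have hm : m ∈ Icc m M := left_mem_Icc.2 hmM.le
  have hξ : ξ ∈ Icc m M := ⟨hmξ.le, hξM.le⟩
  have hF'_nonneg : ∀ t ∈ Icc m ξ, 0 ≤ F' t := fun t ht ↦ by
    simpa [hF'm, hF'ξ] using hF'.ge_on_segment hm hξ (segment_eq_Icc hmξ.le ▸ ht)
  have hF'_nonpos : ∀ t ∈ Icc ξ M, F' t ≤ 0 := fun t ht ↦ by
    simpa [hF'ξ] using hF'.right_le_of_le_left'' hm ⟨hmξ.le.trans ht.1, ht.2⟩ hmξ ht.1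
      (by rw [hF'm, hF'ξ])
  have hmono : MonotoneOn F (Icc m ξ) :=
    monotoneOn_of_hasDerivWithinAt_nonneg (convex_Icc m ξ) (hFc.mono (Icc_subset_Icc_right hξM.le))
      (fun t ht ↦ (hF t (Icc_subset_Icc_right hξM.le (interior_subset ht))).hasDerivWithinAt)
      fun t ht ↦ hF'_nonneg t (interior_subset ht)
  have hanti : AntitoneOn F (Icc ξ M) :=
    antitoneOn_of_hasDerivWithinAt_nonpos (convex_Icc ξ M) (hFc.mono (Icc_subset_Icc_left hmξ.le))
      (fun t ht ↦ (hF t (Icc_subset_Icc_left hmξ.le (interior_subset ht))).hasDerivWithinAt)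
      fun t ht ↦ hF'_nonpos t (interior_subset ht)
  rcases le_total x ξ with hxξ | hξx
  · exact hFm ▸ hmono ⟨le_rfl, hmξ.le⟩ ⟨hx.1, hxξ⟩ hx.1
  · exact hFM ▸ hanti ⟨hξx, hx.2⟩ ⟨hξM.le, le_rfl⟩ hx.2

theorem mul_sub_deriv_le_chord_sub_of_convexOn_deriv {φ φ' : ℝ → ℝ} {m M x : ℝ} (hmM : m < M)
    (hφ : ∀ t ∈ Icc m M, HasDerivAt φ (φ' t) t) (hφ' : ConvexOn ℝ (Icc m M) φ')
    (hx : x ∈ Icc m M) :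
    (M - x) * (x - m) * (φ M - φ m - (M - m) * φ' m)
      ≤ (M - m) * ((M - x) * φ m + (x - m) * φ M - (M - m) * φ x) := by
  set c := φ M - φ m - (M - m) * φ' m
  have hF : ∀ t ∈ Icc m M, HasDerivAt
      (fun t ↦ (M - m) * ((M - t) * φ m + (t - m) * φ M - (M - m) * φ t) - c * ((M - t) * (t - m)))
      ((M - m) * (φ M - φ m - (M - m) * φ' t) - c * (M + m - 2 * t)) t := fun t ht ↦ by
    have hlin := (hasDerivAt_id' t).const_sub M
    have hlin' := (hasDerivAt_id' t).sub_const m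
    exact ((((hlin.mul_const (φ m)).add (hlin'.mul_const (φ M))).sub
      ((hφ t ht).const_mul (M - m))).const_mul (M - m)).sub ((hlin.mul hlin').const_mul c)
      |>.congr_deriv (by ring)
  have hF' : ConcaveOn ℝ (Icc m M)
      (fun t ↦ (M - m) * (φ M - φ m - (M - m) * φ' t) - c * (M + m - 2 * t)) :=
    (((LinearMap.mulLeft ℝ (2 * c)).concaveOn (convex_Icc m M)).add_const
      ((M - m) * (φ M - φ m) - c * (M + m))).sub (hφ'.smul (sq_nonneg (M - m))) |>.congr
      fun t _ ↦ by
        simp only [Pi.sub_apply, Pi.add_apply, LinearMap.mulLeft_apply, smul_eq_mul]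
        ring
  have := nonneg_of_concaveOn_deriv hmM hF hF' (by ring) (by ring) (by ring) hx
  linarith

theorem chord_sub_le_mul_deriv_sub_of_convexOn_deriv {φ φ' : ℝ → ℝ} {m M x : ℝ} (hmM : m < M)
    (hφ : ∀ t ∈ Icc m M, HasDerivAt φ (φ' t) t) (hφ' : ConvexOn ℝ (Icc m M) φ')
    (hx : x ∈ Icc m M) :
    (M - m) * ((M - x) * φ m + (x - m) * φ M - (M - m) * φ x)
      ≤ (M - x) * (x - m) * ((M - m) * φ' M - (φ M - φ m)) := by
  have h := mul_sub_deriv_le_chord_sub_of_convexOn_deriv (φ := fun t ↦ -φ (-t))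
    (φ' := fun t ↦ φ' (-t)) (neg_lt_neg hmM)
    (fun t ht ↦ ((hφ (-t) (neg_mem_Icc_iff.2 ht)).comp t (hasDerivAt_neg t)).neg.congr_deriv
      (by ring))
    ((hφ'.comp_linearMap (-LinearMap.id)).subset (fun t ht ↦ neg_mem_Icc_iff.2 ht)
      (convex_Icc _ _))
    (neg_mem_Icc_iff.2 (by rwa [neg_neg, neg_neg]))
  simp only [neg_neg] at h
  linear_combination h

theorem ContDiffOn.convexOn_deriv {φ : ℝ → ℝ} {s : Set ℝ} (hs : IsOpen s) (hs' : Convex ℝ s)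
    (hφ : ContDiffOn ℝ 3 φ s) (hφ3 : ∀ t ∈ s, 0 ≤ iteratedDeriv 3 φ t) :
    ConvexOn ℝ s (deriv φ) := by
  have hφ' : ContDiffOn ℝ 2 (deriv φ) s := hφ.deriv_of_isOpen hs (by norm_num)
  have hφ'' : ContDiffOn ℝ 1 (deriv (deriv φ)) s := hφ'.deriv_of_isOpen hs (by norm_num)
  refine convexOn_of_deriv2_nonneg hs' hφ'.continuousOn ?_ ?_ ?_ <;> rw [hs.interior_eq]
  · exact hφ'.differentiableOn (by norm_num)
  · exact hφ''.differentiableOn (by norm_num)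
  · simpa only [iteratedDeriv_eq_iterate, Function.iterate_succ_apply] using hφ3

/-- Pointwise Edmundson–Lah–Ribarič type estimate for 3-convex functions
(inequality (2.5) in the paper). -/
theorem elr_pointwise_tm1 (m M : ℝ) (hmM : m < M)
    (φ : ℝ → ℝ) (a b : ℝ) (ham : a < m) (hMb : M < b)
    (hφ : ContDiffOn ℝ 3 φ (Set.Ioo a b))
    (hφ3 : ∀ t ∈ Set.Ioo a b, 0 ≤ iteratedDeriv 3 φ t)
    (x : ℝ) (hx : x ∈ Set.Ioo m M) :
    let Δ := (φ M - φ m) / (M - m)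
    (M - x) * (x - m) / (M - m) * (Δ - deriv φ m)
        ≤ (M - x) / (M - m) * φ m + (x - m) / (M - m) * φ M - φ x
      ∧ (M - x) / (M - m) * φ m + (x - m) / (M - m) * φ M - φ x
        ≤ (M - x) * (x - m) / (M - m) * (deriv φ M - Δ) := by
  have hsub : Icc m M ⊆ Ioo a b := Icc_subset_Ioo ham hMb
  have hderiv : ∀ t ∈ Icc m M, HasDerivAt φ (deriv φ t) t := fun t ht ↦
    ((hφ.differentiableOn (by norm_num)).differentiableAt
      (isOpen_Ioo.mem_nhds (hsub ht))).hasDerivAt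
  have hconv : ConvexOn ℝ (Icc m M) (deriv φ) :=
    (hφ.convexOn_deriv isOpen_Ioo (convex_Ioo a b) hφ3).subset hsub (convex_Icc m M)
  have hx' := Ioo_subset_Icc_self hx
  have hlow := mul_sub_deriv_le_chord_sub_of_convexOn_deriv hmM hderiv hconv hx'
  have hup := chord_sub_le_mul_deriv_sub_of_convexOn_deriv hmM hderiv hconv hx'
  have hMm : 0 < M - m := sub_pos.2 hmM
  constructor <;> field_simp <;> linarith
end

section
/- Let m < M be real numbers and let φ : ℝ → ℝ be three times continuously differentiable on an open interval containing [m,M] with φ''' ≥ 0 there (φ is 3-convex). Then for every x ∈ (m,M), writing Δ = (φ(M) − φ(m))/(M − m): (x − m)·[Δ − (φ'(x) + φ'(m))/2] ≤ (M − x)/(M − m)·φ(m) + (x − m)/(M − m)·φ(M) − φ(x) ≤ (M − x)·[(φ'(x) + φ'(M))/2 − Δ]. -/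
/-!
Since `φ''' ≥ 0`, the derivative `φ'` is convex, and for a function with convex derivative the
trapezoid rule overestimates increments: `φ v - φ u ≤ (v - u) * (φ' u + φ' v) / 2` (the right-hand
Hermite–Hadamard inequality for `φ'`). The middle term equals `(x - m) * Δ + φ m - φ x`, so the two
inequalities are this bound on `[m, x]` and on `[x, M]`.
-/

open Set

theorem ConvexOn.sub_le_mul_add_div_two_of_hasDerivAt {f f' : ℝ → ℝ} {u v : ℝ} (huv : u ≤ v)
    (hf : ContinuousOn f (Icc u v)) (hderiv : ∀ s ∈ Ioo u v, HasDerivAt f (f' s) s)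
    (hf' : ConvexOn ℝ (Icc u v) f') :
    f v - f u ≤ (v - u) * (f' u + f' v) / 2 := by
  rcases huv.eq_or_lt with rfl | huv
  · simp
  -- `f` minus an antiderivative of the chord of `f'` has nonpositive derivative.
  set k := (f' v - f' u) / (v - u)
  have hchord (s : ℝ) :
      HasDerivAt (fun s ↦ f' u * (s - u) + k * (s - u) ^ 2 / 2) (f' u + k * (s - u)) s := by
    have hlin := (hasDerivAt_id s).sub_const u
    exact ((hlin.const_mul (f' u)).add ((hlin.pow 2).const_mul k |>.div_const 2)).congr_deriv
      (by simp only [mul_one, Nat.cast_ofNat, id_eq, Nat.add_one_sub_one, pow_one]; ring)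
  have hF : AntitoneOn (fun s ↦ f s - (f' u * (s - u) + k * (s - u) ^ 2 / 2)) (Icc u v) := by
    refine antitoneOn_of_hasDerivWithinAt_nonpos (convex_Icc u v) (by fun_prop)
      (f' := fun s ↦ f' s - (f' u + k * (s - u))) (fun s hs ↦ ?_) fun s hs ↦ ?_
    · rw [interior_Icc] at hs ⊢
      exact ((hderiv s hs).sub (hchord s)).hasDerivWithinAt
    · rw [interior_Icc] at hs
      have hsecant := hf'.secant_mono_aux1 (left_mem_Icc.2 huv.le) (right_mem_Icc.2 huv.le)
        hs.1 hs.2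
      have hscaled : (v - u) * (f' s - (f' u + k * (s - u))) ≤ 0 := by
        simp only [k]; field_simp; linarith
      exact nonpos_of_mul_nonpos_right hscaled (sub_pos.2 huv)
  have hFvu := hF (left_mem_Icc.2 huv.le) (right_mem_Icc.2 huv.le) huv.le
  have hk : k * (v - u) = f' v - f' u := div_mul_cancel₀ _ (sub_pos.2 huv).ne'
  linear_combination hFvu + (v - u) / 2 * hk

theorem ContDiffOn.convexOn_deriv_of_iteratedDeriv_three_nonneg {φ : ℝ → ℝ} {s : Set ℝ}
    (hs : IsOpen s) (hconv : Convex ℝ s) (hφ : ContDiffOn ℝ 3 φ s)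
    (hφ3 : ∀ t ∈ s, 0 ≤ iteratedDeriv 3 φ t) : ConvexOn ℝ s (deriv φ) := by
  have h2 : ContDiffOn ℝ 2 (deriv φ) s := hφ.deriv_of_isOpen hs (by norm_num)
  have h1 : ContDiffOn ℝ 1 (deriv (deriv φ)) s := h2.deriv_of_isOpen hs (by norm_num)
  refine convexOn_of_deriv2_nonneg' hconv (h2.differentiableOn (by norm_num))
    (h1.differentiableOn one_ne_zero) ?_
  simpa only [iteratedDeriv_eq_iterate, Function.iterate_succ_apply] using hφ3

/-- Pointwise Edmundson–Lah–Ribarič type estimate for 3-convex functions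
(inequality (2.11) in the paper). -/
theorem elr_pointwise_tm2 (m M : ℝ) (hmM : m < M)
    (φ : ℝ → ℝ) (a b : ℝ) (ham : a < m) (hMb : M < b)
    (hφ : ContDiffOn ℝ 3 φ (Set.Ioo a b))
    (hφ3 : ∀ t ∈ Set.Ioo a b, 0 ≤ iteratedDeriv 3 φ t)
    (x : ℝ) (hx : x ∈ Set.Ioo m M) :
    let Δ := (φ M - φ m) / (M - m)
    (x - m) * (Δ - (deriv φ x + deriv φ m) / 2)
        ≤ (M - x) / (M - m) * φ m + (x - m) / (M - m) * φ M - φ x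
      ∧ (M - x) / (M - m) * φ m + (x - m) / (M - m) * φ M - φ x
        ≤ (M - x) * ((deriv φ x + deriv φ M) / 2 - Δ) := by
  intro Δ
  have hconv := hφ.convexOn_deriv_of_iteratedDeriv_three_nonneg isOpen_Ioo (convex_Ioo a b) hφ3
  have trapezoid {u v : ℝ} (hau : a < u) (huv : u ≤ v) (hvb : v < b) :
      φ v - φ u ≤ (v - u) * (deriv φ u + deriv φ v) / 2 := by
    have hsub : Icc u v ⊆ Ioo a b := Icc_subset_Ioo hau hvb
    refine (hconv.subset hsub (convex_Icc u v)).sub_le_mul_add_div_two_of_hasDerivAt huv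
      (hφ.continuousOn.mono hsub) fun s hs ↦ ?_
    have hs_ab : s ∈ Ioo a b := hsub (Ioo_subset_Icc_self hs)
    exact ((hφ.contDiffAt (isOpen_Ioo.mem_nhds hs_ab)).differentiableAt (by norm_num)).hasDerivAt
  have hleft := trapezoid ham hx.1.le (hx.2.trans hMb)
  have hright := trapezoid (ham.trans hx.1) hx.2.le hMb
  have hMm : M - m ≠ 0 := (sub_pos.2 hmM).ne'
  have hΔ : (M - m) * Δ = φ M - φ m := mul_div_cancel₀ _ hMm
  have hmid : (M - x) / (M - m) * φ m + (x - m) / (M - m) * φ M - φ x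
      = (x - m) * Δ + φ m - φ x := by
    simp only [Δ]; field_simp; ring
  rw [hmid]
  constructor
  · linear_combination hleft
  · linear_combination hright + hΔ
end

section
/- Let m < M be real numbers and let φ : ℝ → ℝ be three times continuously differentiable on an open interval containing [m,M] with φ''' ≥ 0 there (φ is 3-convex). Then for every x ∈ (m,M), writing Δ = (φ(M) − φ(m))/(M − m): (M − x)·[φ'(M) − Δ − (φ''(M)/2)·(M − x)] ≤ (M − x)/(M − m)·φ(m) + (x − m)/(M − m)·φ(M) − φ(x) ≤ (x − m)·[Δ − φ'(m) − (φ''(m)/2)·(x − m)]. -/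
/-!
Taylor's formula at `m` with Lagrange remainder gives
`φ x = φ m + φ' m (x - m) + φ'' m / 2 (x - m)² + φ''' ξ / 6 (x - m)³`, and the cubic term is
nonnegative since `φ''' ≥ 0` and `x > m`; expanding at `M` instead, the cubic term is nonpositive
since `x < M`. Writing the chord value as `φ m + Δ (x - m) = φ M - Δ (M - x)`, these two
one-sided quadratic Taylor bounds are exactly the two inequalities.
-/

open Set Finset

theorem exists_taylor_lagrange_iteratedDeriv {f : ℝ → ℝ} {U : Set ℝ} {x₀ x : ℝ} {n : ℕ}
    (hU : IsOpen U) (hf : ContDiffOn ℝ (n + 1) f U) (hx : x₀ ≠ x) (hsub : uIcc x₀ x ⊆ U) :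
    ∃ ξ ∈ uIoo x₀ x, f x = ∑ k ∈ range (n + 1), iteratedDeriv k f x₀ / k.factorial * (x - x₀) ^ k
      + iteratedDeriv (n + 1) f ξ * (x - x₀) ^ (n + 1) / (n + 1).factorial := by
  have hs : UniqueDiffOn ℝ (uIcc x₀ x) := uniqueDiffOn_Icc (inf_lt_sup.2 hx)
  have hfs : ContDiffOn ℝ (n + 1) f (uIcc x₀ x) := hf.mono hsub
  have hwithin : ∀ k ≤ n + 1, ∀ t ∈ uIcc x₀ x,
      iteratedDerivWithin k f (uIcc x₀ x) t = iteratedDeriv k f t := fun k hk t ht =>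
    iteratedDerivWithin_eq_iteratedDeriv hs
      ((hf.contDiffAt (hU.mem_nhds (hsub ht))).of_le (by exact_mod_cast hk)) ht
  obtain ⟨ξ, hξ, h⟩ := taylor_mean_remainder_lagrange (n := n) hx (hfs.of_le (by norm_cast; omega))
    ((hfs.differentiableOn_iteratedDerivWithin (by norm_cast; omega) hs).mono
      uIoo_subset_uIcc_self)
  refine ⟨ξ, hξ, ?_⟩
  rw [hwithin _ le_rfl ξ (uIoo_subset_uIcc_self hξ), taylor_within_apply] at h
  rw [← sub_eq_iff_eq_add', ← h]
  congr 1
  refine Finset.sum_congr rfl fun k hk => ?_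
  rw [hwithin k (by simp at hk; omega) x₀ left_mem_uIcc, smul_eq_mul]
  ring

theorem exists_eq_quadratic_taylor_add_cube {f : ℝ → ℝ} {U : Set ℝ} {x₀ x : ℝ}
    (hU : IsOpen U) (hf : ContDiffOn ℝ 3 f U) (hx : x₀ ≠ x) (hsub : uIcc x₀ x ⊆ U) :
    ∃ ξ ∈ uIoo x₀ x, f x = f x₀ + deriv f x₀ * (x - x₀) + iteratedDeriv 2 f x₀ / 2 * (x - x₀) ^ 2
      + iteratedDeriv 3 f ξ * (x - x₀) ^ 3 / 6 := by
  obtain ⟨ξ, hξ, h⟩ := exists_taylor_lagrange_iteratedDeriv (n := 2) hU hf hx hsub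
  refine ⟨ξ, hξ, ?_⟩
  simp only [Finset.sum_range_succ, Finset.sum_range_zero, iteratedDeriv_zero,
    iteratedDeriv_one] at h
  norm_num at h
  linarith

theorem quadratic_taylor_le_of_iteratedDeriv_three_nonneg {f : ℝ → ℝ} {U : Set ℝ} {x₀ x : ℝ}
    (hU : IsOpen U) (hf : ContDiffOn ℝ 3 f U) (hx : x₀ < x) (hsub : Icc x₀ x ⊆ U)
    (hf₃ : ∀ t ∈ Ioo x₀ x, 0 ≤ iteratedDeriv 3 f t) :
    f x₀ + deriv f x₀ * (x - x₀) + iteratedDeriv 2 f x₀ / 2 * (x - x₀) ^ 2 ≤ f x := by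
  obtain ⟨ξ, hξ, h⟩ := exists_eq_quadratic_taylor_add_cube hU hf hx.ne
    (by rwa [uIcc_of_le hx.le])
  rw [uIoo_of_le hx.le] at hξ
  have : 0 ≤ iteratedDeriv 3 f ξ * (x - x₀) ^ 3 / 6 :=
    div_nonneg (mul_nonneg (hf₃ ξ hξ) (pow_nonneg (sub_nonneg.2 hx.le) 3)) (by norm_num)
  linarith

theorem le_quadratic_taylor_of_iteratedDeriv_three_nonneg {f : ℝ → ℝ} {U : Set ℝ} {x₀ x : ℝ}
    (hU : IsOpen U) (hf : ContDiffOn ℝ 3 f U) (hx : x < x₀) (hsub : Icc x x₀ ⊆ U)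
    (hf₃ : ∀ t ∈ Ioo x x₀, 0 ≤ iteratedDeriv 3 f t) :
    f x ≤ f x₀ + deriv f x₀ * (x - x₀) + iteratedDeriv 2 f x₀ / 2 * (x - x₀) ^ 2 := by
  obtain ⟨ξ, hξ, h⟩ := exists_eq_quadratic_taylor_add_cube hU hf hx.ne'
    (by rwa [uIcc_of_ge hx.le])
  rw [uIoo_of_ge hx.le] at hξ
  have : iteratedDeriv 3 f ξ * (x - x₀) ^ 3 / 6 ≤ 0 :=
    div_nonpos_of_nonpos_of_nonneg (mul_nonpos_of_nonneg_of_nonpos (hf₃ ξ hξ)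
      (Odd.pow_nonpos (by decide) (sub_nonpos.2 hx.le))) (by norm_num)
  linarith

/-- Pointwise Edmundson–Lah–Ribarič type estimate for 3-convex functions
(inequality (2.16) in the paper). -/
theorem elr_pointwise_tm3 (m M : ℝ) (hmM : m < M)
    (φ : ℝ → ℝ) (a b : ℝ) (ham : a < m) (hMb : M < b)
    (hφ : ContDiffOn ℝ 3 φ (Set.Ioo a b))
    (hφ3 : ∀ t ∈ Set.Ioo a b, 0 ≤ iteratedDeriv 3 φ t)
    (x : ℝ) (hx : x ∈ Set.Ioo m M) :
    let Δ := (φ M - φ m) / (M - m)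
    (M - x) * (deriv φ M - Δ - iteratedDeriv 2 φ M / 2 * (M - x))
        ≤ (M - x) / (M - m) * φ m + (x - m) / (M - m) * φ M - φ x
      ∧ (M - x) / (M - m) * φ m + (x - m) / (M - m) * φ M - φ x
        ≤ (x - m) * (Δ - deriv φ m - iteratedDeriv 2 φ m / 2 * (x - m)) := by
  intro Δ
  obtain ⟨hmx, hxM⟩ := hx
  have hsub : ∀ {s t : ℝ}, m ≤ s → t ≤ M → Icc s t ⊆ Ioo a b := fun hs ht =>
    Icc_subset_Ioo (ham.trans_le hs) (ht.trans_lt hMb)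
  have hMm : M - m ≠ 0 := (sub_pos.2 hmM).ne'
  have hΔ : φ M = φ m + Δ * (M - m) := by
    simp only [Δ]; field_simp; ring
  have hchord : (M - x) / (M - m) * φ m + (x - m) / (M - m) * φ M = φ m + Δ * (x - m) := by
    simp only [Δ]; field_simp; ring
  have hupper := quadratic_taylor_le_of_iteratedDeriv_three_nonneg isOpen_Ioo hφ hmx
    (hsub le_rfl hxM.le) fun t ht => hφ3 t (hsub le_rfl hxM.le (Ioo_subset_Icc_self ht))
  have hlower := le_quadratic_taylor_of_iteratedDeriv_three_nonneg isOpen_Ioo hφ hxM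
    (hsub hmx.le le_rfl) fun t ht => hφ3 t (hsub hmx.le le_rfl (Ioo_subset_Icc_self ht))
  rw [hchord]
  constructor
  · linear_combination hlower + hΔ
  · linear_combination hupper
end

section
/- Let f : ℝ → ℝ be three times continuously differentiable on an open interval containing [m,M] with f''' ≥ 0 there (f is 3-convex). Then, writing Δ = (f(M) − f(m))/(M − m): (1 − m)·[Δ − f'(m)/2] − (1/2)·∑_{i=1}^n (p_i − m·q_i)·f'(p_i/q_i) ≤ (M − 1)/(M − m)·f(m) + (1 − m)/(M − m)·f(M) − D̃_f(p,q) ≤ (1/2)·∑_{i=1}^n (M·q_i − p_i)·f'(p_i/q_i) − (M − 1)·[Δ − f'(M)/2]. -/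
/-!
Since `f''' ≥ 0`, the derivative `f'` is convex, so the trapezoid rule overestimates its
integral: `f v - f u ≤ (v - u) (f' u + f' v) / 2`. Applied on `[m, x]` and on `[x, M]` at the
points `x = p_i / q_i`, and averaged with the weights `q_i` (whose mean `∑ q_i x_i` is `1`), this
gives the two bounds on the gap between the chord of `f` over `[m, M]` and `D̃_f(p, q)`.
-/

open Set Finset

theorem convexOn_deriv_of_iteratedDeriv_three_nonneg_s8 {U : Set ℝ} {f : ℝ → ℝ}
    (hU : IsOpen U) (hUc : Convex ℝ U) (hf : ContDiffOn ℝ 3 f U)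
    (hf3 : ∀ x ∈ U, 0 ≤ iteratedDeriv 3 f x) : ConvexOn ℝ U (deriv f) := by
  have hf' : ContDiffOn ℝ 2 (deriv f) U := hf.deriv_of_isOpen hU (by norm_num)
  have hf'' : ContDiffOn ℝ 1 (deriv (deriv f)) U := hf'.deriv_of_isOpen hU (by norm_num)
  refine convexOn_of_deriv2_nonneg hUc hf'.continuousOn ?_ ?_ ?_ <;> rw [hU.interior_eq]
  · exact hf'.differentiableOn (by norm_num)
  · exact hf''.differentiableOn (by norm_num)
  · simpa [iteratedDeriv_eq_iterate] using hf3

theorem sub_le_trapezoid_of_convexOn_deriv {S : Set ℝ} {f : ℝ → ℝ}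
    (hf : ∀ x ∈ S, DifferentiableAt ℝ f x)
    (hf' : ∀ x ∈ S, DifferentiableAt ℝ (deriv f) x) (hconv : ConvexOn ℝ S (deriv f))
    {u v : ℝ} (hu : u ∈ S) (hv : v ∈ S) (huv : u ≤ v) :
    f v - f u ≤ (v - u) * (deriv f u + deriv f v) / 2 := by
  have hIcc : Icc u v ⊆ S := hconv.1.ordConnected.out hu hv
  set g : ℝ → ℝ := fun x ↦ (x - u) * (deriv f u + deriv f x) / 2 - (f x - f u) with hg
  have hg' : ∀ x ∈ S, HasDerivAt g
      ((deriv f u - deriv f x + (x - u) * deriv (deriv f) x) / 2) x := by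
    intro x hx
    refine (((((hasDerivAt_id x).sub_const u).mul ((hf' x hx).hasDerivAt.const_add
      (deriv f u))).div_const 2).sub ((hf x hx).hasDerivAt.sub_const (f u))).congr_deriv ?_
    simp only [id]
    ring
  have hmono : MonotoneOn g (Icc u v) := by
    refine monotoneOn_of_hasDerivWithinAt_nonneg (convex_Icc u v)
      (fun x hx ↦ (hg' x (hIcc hx)).continuousAt.continuousWithinAt)
      (fun x hx ↦ (hg' x (hIcc (interior_subset hx))).hasDerivWithinAt) ?_
    intro x hx
    rw [interior_Icc] at hx
    -- the tangent to the convex function `deriv f` at `x` lies below its chord from `u`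
    have hslope := hconv.slope_le_deriv hu (hIcc (Ioo_subset_Icc_self hx)) hx.1
      (hf' x (hIcc (Ioo_subset_Icc_self hx)))
    rw [slope_def_field, div_le_iff₀ (sub_pos.2 hx.1)] at hslope
    linarith
  have hgv := hmono (left_mem_Icc.2 huv) (right_mem_Icc.2 huv) huv
  simp only [hg, sub_self, zero_mul, zero_div] at hgv
  linarith

section EdmundsonLahRibaric

variable {ι : Type*} {s : Finset ι} {w x : ι → ℝ} {f : ℝ → ℝ} {m M c : ℝ}

theorem edmundson_lah_ribaric_lower_of_convexOn_deriv (hmM : m < M)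
    (hf : ∀ y ∈ Icc m M, DifferentiableAt ℝ f y)
    (hf' : ∀ y ∈ Icc m M, DifferentiableAt ℝ (deriv f) y)
    (hconv : ConvexOn ℝ (Icc m M) (deriv f))
    (hw : ∀ i ∈ s, 0 ≤ w i) (hw1 : ∑ i ∈ s, w i = 1) (hx : ∀ i ∈ s, x i ∈ Icc m M)
    (hc : ∑ i ∈ s, w i * x i = c) :
    (c - m) * ((f M - f m) / (M - m) - deriv f m / 2)
        - 1 / 2 * ∑ i ∈ s, w i * (x i - m) * deriv f (x i)
      ≤ (M - c) / (M - m) * f m + (c - m) / (M - m) * f M - ∑ i ∈ s, w i * f (x i) := by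
  have hgap :
      0 ≤ ∑ i ∈ s, w i * ((x i - m) * (deriv f m + deriv f (x i)) / 2 - (f (x i) - f m)) :=
    sum_nonneg fun i hi ↦ mul_nonneg (hw i hi) <| sub_nonneg.2 <|
      sub_le_trapezoid_of_convexOn_deriv hf hf' hconv (left_mem_Icc.2 hmM.le) (hx i hi) (hx i hi).1
  have hexpand : ∑ i ∈ s, w i * ((x i - m) * (deriv f m + deriv f (x i)) / 2 - (f (x i) - f m))
      = deriv f m / 2 * ∑ i ∈ s, w i * x i - m * deriv f m / 2 * ∑ i ∈ s, w i
        + 1 / 2 * ∑ i ∈ s, w i * (x i - m) * deriv f (x i) - ∑ i ∈ s, w i * f (x i)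
        + f m * ∑ i ∈ s, w i := by
    simp only [mul_sum, ← sum_sub_distrib, ← sum_add_distrib]
    exact sum_congr rfl fun i _ ↦ by ring
  have hchord : (M - c) / (M - m) * f m + (c - m) / (M - m) * f M
      = f m + (c - m) * ((f M - f m) / (M - m)) := by
    field_simp [sub_ne_zero.2 hmM.ne']
    ring
  rw [hexpand, hw1, hc] at hgap
  linear_combination hgap - hchord

theorem edmundson_lah_ribaric_upper_of_convexOn_deriv (hmM : m < M)
    (hf : ∀ y ∈ Icc m M, DifferentiableAt ℝ f y)
    (hf' : ∀ y ∈ Icc m M, DifferentiableAt ℝ (deriv f) y)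
    (hconv : ConvexOn ℝ (Icc m M) (deriv f))
    (hw : ∀ i ∈ s, 0 ≤ w i) (hw1 : ∑ i ∈ s, w i = 1) (hx : ∀ i ∈ s, x i ∈ Icc m M)
    (hc : ∑ i ∈ s, w i * x i = c) :
    (M - c) / (M - m) * f m + (c - m) / (M - m) * f M - ∑ i ∈ s, w i * f (x i)
      ≤ 1 / 2 * ∑ i ∈ s, w i * (M - x i) * deriv f (x i)
        - (M - c) * ((f M - f m) / (M - m) - deriv f M / 2) := by
  have hgap :
      0 ≤ ∑ i ∈ s, w i * ((M - x i) * (deriv f (x i) + deriv f M) / 2 - (f M - f (x i))) :=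
    sum_nonneg fun i hi ↦ mul_nonneg (hw i hi) <| sub_nonneg.2 <|
      sub_le_trapezoid_of_convexOn_deriv hf hf' hconv (hx i hi) (right_mem_Icc.2 hmM.le)
        (hx i hi).2
  have hexpand : ∑ i ∈ s, w i * ((M - x i) * (deriv f (x i) + deriv f M) / 2 - (f M - f (x i)))
      = 1 / 2 * ∑ i ∈ s, w i * (M - x i) * deriv f (x i) + M * deriv f M / 2 * ∑ i ∈ s, w i
        - deriv f M / 2 * ∑ i ∈ s, w i * x i - f M * ∑ i ∈ s, w i
        + ∑ i ∈ s, w i * f (x i) := by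
    simp only [mul_sum, ← sum_sub_distrib, ← sum_add_distrib]
    exact sum_congr rfl fun i _ ↦ by ring
  have hchord : (M - c) / (M - m) * f m + (c - m) / (M - m) * f M
      = f M - (M - c) * ((f M - f m) / (M - m)) := by
    field_simp [sub_ne_zero.2 hmM.ne']
    ring
  rw [hexpand, hw1, hc] at hgap
  linear_combination hgap + hchord

end EdmundsonLahRibaric

theorem elr_f_divergence_tm2_general (n : ℕ) (p q : Fin n → ℝ)
    (m M : ℝ) (hmM : m < M)
    (hq : ∀ i, 0 < q i)
    (hps : ∑ i, p i = 1) (hqs : ∑ i, q i = 1)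
    (hratio : ∀ i, p i / q i ∈ Set.Icc m M)
    (f : ℝ → ℝ) (a b : ℝ) (ham : a < m) (hMb : M < b)
    (hf : ContDiffOn ℝ 3 f (Set.Ioo a b))
    (hf3 : ∀ x ∈ Set.Ioo a b, 0 ≤ iteratedDeriv 3 f x) :
    let Δ := (f M - f m) / (M - m)
    (1 - m) * (Δ - deriv f m / 2)
          - (1 / 2) * ∑ i, (p i - m * q i) * deriv f (p i / q i)
        ≤ (M - 1) / (M - m) * f m + (1 - m) / (M - m) * f M
            - ∑ i, q i * f (p i / q i)
      ∧ (M - 1) / (M - m) * f m + (1 - m) / (M - m) * f M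
            - ∑ i, q i * f (p i / q i)
        ≤ (1 / 2) * ∑ i, (M * q i - p i) * deriv f (p i / q i)
            - (M - 1) * (Δ - deriv f M / 2) := by
  intro Δ
  have hsub : Icc m M ⊆ Ioo a b := Icc_subset_Ioo ham hMb
  have hconv : ConvexOn ℝ (Icc m M) (deriv f) :=
    (convexOn_deriv_of_iteratedDeriv_three_nonneg_s8 isOpen_Ioo (convex_Ioo a b) hf hf3).subset
      hsub (convex_Icc m M)
  have hdiff : ∀ y ∈ Icc m M, DifferentiableAt ℝ f y := fun y hy ↦
    (hf.contDiffAt (isOpen_Ioo.mem_nhds (hsub hy))).differentiableAt (by norm_num)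
  have hf' : ContDiffOn ℝ 2 (deriv f) (Ioo a b) := hf.deriv_of_isOpen isOpen_Ioo (by norm_num)
  have hdiff' : ∀ y ∈ Icc m M, DifferentiableAt ℝ (deriv f) y := fun y hy ↦
    (hf'.contDiffAt (isOpen_Ioo.mem_nhds (hsub hy))).differentiableAt (by norm_num)
  have hpq : ∀ i, q i * (p i / q i) = p i := fun i ↦ mul_div_cancel₀ (p i) (hq i).ne'
  have hmean : ∑ i, q i * (p i / q i) = 1 := by simp only [hpq, hps]
  have hlow := edmundson_lah_ribaric_lower_of_convexOn_deriv hmM hdiff hdiff' hconv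
    (fun i _ ↦ (hq i).le) hqs (fun i _ ↦ hratio i) hmean
  have hupp := edmundson_lah_ribaric_upper_of_convexOn_deriv hmM hdiff hdiff' hconv
    (fun i _ ↦ (hq i).le) hqs (fun i _ ↦ hratio i) hmean
  have hweight_low : ∀ i, q i * (p i / q i - m) = p i - m * q i := fun i ↦ by
    rw [mul_sub, hpq]; ring
  have hweight_upp : ∀ i, q i * (M - p i / q i) = M * q i - p i := fun i ↦ by
    rw [mul_sub, hpq]; ring
  simp only [hweight_low, hweight_upp] at hlow hupp
  exact ⟨hlow, hupp⟩

/-- Edmundson–Lah–Ribarič type inequality for the generalized f-divergence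
functional (Theorem 3.1 of the paper). -/
theorem elr_f_divergence_tm2 (n : ℕ) (p q : Fin n → ℝ)
    (m M : ℝ) (hmM : m < M) (hm1 : m ≤ 1) (h1M : 1 ≤ M)
    (hp : ∀ i, 0 ≤ p i) (hq : ∀ i, 0 < q i)
    (hps : ∑ i, p i = 1) (hqs : ∑ i, q i = 1)
    (hratio : ∀ i, p i / q i ∈ Set.Icc m M)
    (f : ℝ → ℝ) (a b : ℝ) (ham : a < m) (hMb : M < b)
    (hf : ContDiffOn ℝ 3 f (Set.Ioo a b))
    (hf3 : ∀ x ∈ Set.Ioo a b, 0 ≤ iteratedDeriv 3 f x) :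
    let Δ := (f M - f m) / (M - m)
    (1 - m) * (Δ - deriv f m / 2)
          - (1 / 2) * ∑ i, (p i - m * q i) * deriv f (p i / q i)
        ≤ (M - 1) / (M - m) * f m + (1 - m) / (M - m) * f M
            - ∑ i, q i * f (p i / q i)
      ∧ (M - 1) / (M - m) * f m + (1 - m) / (M - m) * f M
            - ∑ i, q i * f (p i / q i)
        ≤ (1 / 2) * ∑ i, (M * q i - p i) * deriv f (p i / q i)
            - (M - 1) * (Δ - deriv f M / 2) :=
  elr_f_divergence_tm2_general n p q m M hmM hq hps hqs hratio f a b ham hMb hf hf3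
end

section
/- Assume additionally 0 < m. For the Kullback–Leibler generating function f(t) = t·ln t one has f''' < 0 on (0,∞), so −f is 3-convex and the Edmundson–Lah–Ribarič chain reverses: writing Δ = (M·ln M − m·ln m)/(M − m), (M − 1)·[(ln M + 1) − Δ] − (1/(2M))·∑_{i=1}^n (M·q_i − p_i)²/q_i ≥ (M − 1)/(M − m)·m·ln m + (1 − m)/(M − m)·M·ln M − ∑_{i=1}^n p_i·ln(p_i/q_i) ≥ (1 − m)·[Δ − (ln m + 1)] − (1/(2m))·∑_{i=1}^n (p_i − m·q_i)²/q_i. -/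
/-!
Since `(t ln t)'' = 1/t`, on `[m, x]` the second derivative is at most `1/m` and on `[x, M]` at
least `1/M`, so `t ln t` lies below its second-order Taylor polynomial at `m` with curvature `1/m`
and above the one at `M` with curvature `1/M`. Evaluating at `x = pᵢ/qᵢ` and averaging with
weights `qᵢ` bounds the Kullback–Leibler divergence above and below; the Edmundson–Lah–Ribarič
chain is this pair of bounds rearranged.
-/

open Real Finset

theorem iteratedDeriv_three_mul_log (t : ℝ) :
    iteratedDeriv 3 (fun s : ℝ => s * log s) t = -(t ^ 2)⁻¹ := by
  have h2 : deriv^[2] (fun s : ℝ => s * log s) = fun s => s⁻¹ := funext deriv2_mul_log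
  rw [iteratedDeriv_eq_iterate, Function.iterate_succ_apply', h2, deriv_inv]

theorem monotoneOn_sq_half_sub_mul_log :
    MonotoneOn (fun t : ℝ => t ^ 2 / 2 - t * log t) (Set.Ioi 0) := by
  have hderiv : ∀ t : ℝ, 0 < t →
      HasDerivAt (fun t : ℝ => t ^ 2 / 2 - t * log t) (t - (log t + 1)) t := fun t ht => by
    have hsq : HasDerivAt (fun t : ℝ => t ^ 2 / 2) t t := by
      simpa using (hasDerivAt_pow 2 t).div_const 2
    exact hsq.sub (hasDerivAt_mul_log ht.ne')
  refine monotoneOn_of_hasDerivWithinAt_nonneg (f' := fun t => t - (log t + 1)) (convex_Ioi 0)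
    (fun t ht => (hderiv t ht).continuousAt.continuousWithinAt) (fun t ht => ?_) (fun t ht => ?_)
  all_goals rw [interior_Ioi] at ht
  · exact (hderiv t ht).hasDerivWithinAt
  · linarith [log_le_sub_one_of_pos ht]

/-- Since `t ↦ t²/2 - t ln t` is increasing, this Taylor gap has the sign of `x - a`. -/
theorem mul_log_taylor_sub_eq (a x : ℝ) (ha : 0 < a) (hx : 0 < x) :
    a * log a + (x - a) * (log a + 1) + (x - a) ^ 2 / (2 * a) - x * log x
      = a * ((x / a) ^ 2 / 2 - x / a * log (x / a)) - a * (1 ^ 2 / 2 - 1 * log 1) := by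
  rw [log_div hx.ne' ha.ne', log_one]
  field_simp
  ring

theorem mul_log_le_taylor {a x : ℝ} (ha : 0 < a) (hax : a ≤ x) :
    x * log x ≤ a * log a + (x - a) * (log a + 1) + (x - a) ^ 2 / (2 * a) := by
  have hx : 0 < x := ha.trans_le hax
  have hmono := monotoneOn_sq_half_sub_mul_log (Set.mem_Ioi.2 one_pos)
    (Set.mem_Ioi.2 (div_pos hx ha)) ((one_le_div ha).2 hax)
  linarith [mul_log_taylor_sub_eq a x ha hx, mul_le_mul_of_nonneg_left hmono ha.le]

theorem taylor_le_mul_log {a x : ℝ} (hx : 0 < x) (hxa : x ≤ a) :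
    a * log a + (x - a) * (log a + 1) + (x - a) ^ 2 / (2 * a) ≤ x * log x := by
  have ha : 0 < a := hx.trans_le hxa
  have hmono := monotoneOn_sq_half_sub_mul_log (Set.mem_Ioi.2 (div_pos hx ha))
    (Set.mem_Ioi.2 one_pos) ((div_le_one ha).2 hxa)
  linarith [mul_log_taylor_sub_eq a x ha hx, mul_le_mul_of_nonneg_left hmono ha.le]

section WeightedSums

variable {ι : Type*} [Fintype ι] {p q : ι → ℝ}

theorem sum_mul_log_div_eq_sum_mul (hq : ∀ i, q i ≠ 0) :
    ∑ i, p i * log (p i / q i) = ∑ i, q i * (p i / q i * log (p i / q i)) := by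
  refine sum_congr rfl fun i _ => ?_
  rw [← mul_assoc, mul_div_cancel₀ _ (hq i)]

theorem sum_mul_taylor_div_eq (hq : ∀ i, q i ≠ 0) (hps : ∑ i, p i = 1) (hqs : ∑ i, q i = 1)
    (a : ℝ) :
    ∑ i, q i * (a * log a + (p i / q i - a) * (log a + 1) + (p i / q i - a) ^ 2 / (2 * a))
      = a * log a + (1 - a) * (log a + 1) + 1 / (2 * a) * ∑ i, (p i - a * q i) ^ 2 / q i := by
  have hterm : ∀ i, q i * (a * log a + (p i / q i - a) * (log a + 1)
      + (p i / q i - a) ^ 2 / (2 * a))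
        = a * log a * q i + (log a + 1) * (p i - a * q i)
          + 1 / (2 * a) * ((p i - a * q i) ^ 2 / q i) := fun i => by
    have := hq i
    field_simp
  simp only [hterm, sum_add_distrib, ← mul_sum, sum_sub_distrib, hps, hqs]
  ring

theorem sum_mul_log_div_le (hq : ∀ i, 0 < q i) (hps : ∑ i, p i = 1) (hqs : ∑ i, q i = 1)
    {m : ℝ} (hm : 0 < m) (hmpq : ∀ i, m ≤ p i / q i) :
    ∑ i, p i * log (p i / q i)
      ≤ m * log m + (1 - m) * (log m + 1) + 1 / (2 * m) * ∑ i, (p i - m * q i) ^ 2 / q i := by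
  have hq' : ∀ i, q i ≠ 0 := fun i => (hq i).ne'
  rw [sum_mul_log_div_eq_sum_mul hq', ← sum_mul_taylor_div_eq hq' hps hqs]
  exact sum_le_sum fun i _ =>
    mul_le_mul_of_nonneg_left (mul_log_le_taylor hm (hmpq i)) (hq i).le

theorem le_sum_mul_log_div (hq : ∀ i, 0 < q i) (hps : ∑ i, p i = 1) (hqs : ∑ i, q i = 1)
    {M : ℝ} (hpq : ∀ i, 0 < p i / q i) (hpqM : ∀ i, p i / q i ≤ M) :
    M * log M + (1 - M) * (log M + 1) + 1 / (2 * M) * ∑ i, (M * q i - p i) ^ 2 / q i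
      ≤ ∑ i, p i * log (p i / q i) := by
  have hq' : ∀ i, q i ≠ 0 := fun i => (hq i).ne'
  simp_rw [sub_sq_comm (M * q _)]
  rw [sum_mul_log_div_eq_sum_mul hq', ← sum_mul_taylor_div_eq hq' hps hqs]
  exact sum_le_sum fun i _ =>
    mul_le_mul_of_nonneg_left (taylor_le_mul_log (hpq i) (hpqM i)) (hq i).le

end WeightedSums

theorem elr_kullback_leibler_general (n : ℕ) (p q : Fin n → ℝ)
    (m M : ℝ) (hmM : m < M) (hm0 : 0 < m)
    (hq : ∀ i, 0 < q i)
    (hps : ∑ i, p i = 1) (hqs : ∑ i, q i = 1)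
    (hratio : ∀ i, p i / q i ∈ Set.Icc m M) :
    (∀ t : ℝ, 0 < t → iteratedDeriv 3 (fun s : ℝ => s * Real.log s) t < 0)
      ∧ (let Δ := (M * Real.log M - m * Real.log m) / (M - m)
        (M - 1) * ((Real.log M + 1) - Δ)
              - 1 / (2 * M) * ∑ i, (M * q i - p i) ^ 2 / q i
            ≥ (M - 1) / (M - m) * (m * Real.log m) + (1 - m) / (M - m) * (M * Real.log M)
                - ∑ i, p i * Real.log (p i / q i)
          ∧ (M - 1) / (M - m) * (m * Real.log m) + (1 - m) / (M - m) * (M * Real.log M)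
                - ∑ i, p i * Real.log (p i / q i)
            ≥ (1 - m) * (Δ - (Real.log m + 1))
                - 1 / (2 * m) * ∑ i, (p i - m * q i) ^ 2 / q i) := by
  refine ⟨fun t ht => ?_, ?_⟩
  · rw [iteratedDeriv_three_mul_log]
    exact neg_neg_of_pos (by positivity)
  have upper := sum_mul_log_div_le hq hps hqs hm0 fun i => (hratio i).1
  have lower := le_sum_mul_log_div hq hps hqs (fun i => hm0.trans_le (hratio i).1)
    fun i => (hratio i).2
  have hMm : M - m ≠ 0 := (sub_pos.2 hmM).ne'
  have hΔm : m * log m + (1 - m) * ((M * log M - m * log m) / (M - m))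
      = (M - 1) / (M - m) * (m * log m) + (1 - m) / (M - m) * (M * log M) := by
    field_simp
    ring
  have hΔM : M * log M - (M - 1) * ((M * log M - m * log m) / (M - m))
      = (M - 1) / (M - m) * (m * log m) + (1 - m) / (M - m) * (M * log M) := by
    field_simp
    ring
  exact ⟨by linarith, by linarith⟩

/-- Kullback–Leibler divergence: the generating function `t ↦ t·ln t` has negative
third derivative on `(0,∞)`, and the Edmundson–Lah–Ribarič chain reverses
(Example 3.1 of the paper). -/
theorem elr_kullback_leibler (n : ℕ) (p q : Fin n → ℝ)
    (m M : ℝ) (hmM : m < M) (hm0 : 0 < m) (hm1 : m ≤ 1) (h1M : 1 ≤ M)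
    (hp : ∀ i, 0 ≤ p i) (hq : ∀ i, 0 < q i)
    (hps : ∑ i, p i = 1) (hqs : ∑ i, q i = 1)
    (hratio : ∀ i, p i / q i ∈ Set.Icc m M) :
    (∀ t : ℝ, 0 < t → iteratedDeriv 3 (fun s : ℝ => s * Real.log s) t < 0)
      ∧ (let Δ := (M * Real.log M - m * Real.log m) / (M - m)
        (M - 1) * ((Real.log M + 1) - Δ)
              - 1 / (2 * M) * ∑ i, (M * q i - p i) ^ 2 / q i
            ≥ (M - 1) / (M - m) * (m * Real.log m) + (1 - m) / (M - m) * (M * Real.log M)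
                - ∑ i, p i * Real.log (p i / q i)
          ∧ (M - 1) / (M - m) * (m * Real.log m) + (1 - m) / (M - m) * (M * Real.log M)
                - ∑ i, p i * Real.log (p i / q i)
            ≥ (1 - m) * (Δ - (Real.log m + 1))
                - 1 / (2 * m) * ∑ i, (p i - m * q i) ^ 2 / q i) :=
  elr_kullback_leibler_general n p q m M hmM hm0 hq hps hqs hratio
end

section
/- Assume additionally 0 < m. For the Hellinger generating function f(t) = (1/2)·(1 − √t)² one has f''' < 0 on (0,∞), so −f is 3-convex and the Edmundson–Lah–Ribarič chain reverses: writing Δ = (f(M) − f(m))/(M − m) with f as above, (M − 1)·[(1/2 − 1/(2√M)) − Δ] − (1/(8·M^{3/2}))·∑_{i=1}^n (M·q_i − p_i)²/q_i ≥ (M − 1)/(M − m)·(1/2)(1 − √m)² + (1 − m)/(M − m)·(1/2)(1 − √M)² − (1/2)·∑_{i=1}^n (√q_i − √p_i)² ≥ (1 − m)·[Δ − (1/2 − 1/(2√m))] − (1/(8·m^{3/2}))·∑_{i=1}^n (p_i − m·q_i)²/q_i. -/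
/-!
The Hellinger function `f t = (1 - √t)² / 2` has `f''' t = -(3/8) t^(-5/2) < 0`. After the
substitution `t = x²`, `c = a²` its second-order Taylor remainder at `c > 0` factors as
`(a - x)³ (3a + x) / (8a³)`, which is `≥ 0` for `t ≤ c` and `≤ 0` for `t ≥ c`. Averaging the
remainder at `M` (resp. at `m`) over the points `pᵢ/qᵢ ∈ [m, M]` with weights `qᵢ`, and using
`∑ qᵢ · pᵢ/qᵢ = 1`, gives the upper (resp. lower) bound of the reversed
Edmundson–Lah–Ribarič chain.
-/

open Finset Filter Real Topology

noncomputable def fDivergence {ι : Type*} [Fintype ι] (f : ℝ → ℝ) (p q : ι → ℝ) : ℝ :=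
  ∑ i, q i * f (p i / q i)

section fDivergence

variable {ι : Type*} [Fintype ι] {p q : ι → ℝ}

theorem sum_mul_taylorRemainder_div (f : ℝ → ℝ) (c d e : ℝ) (hq : ∀ i, q i ≠ 0)
    (hps : ∑ i, p i = 1) (hqs : ∑ i, q i = 1) :
    ∑ i, q i * (f (p i / q i) - f c - d * (p i / q i - c) - e * (p i / q i - c) ^ 2)
      = fDivergence f p q - f c - d * (1 - c) - e * ∑ i, (p i - c * q i) ^ 2 / q i := by
  have hterm : ∀ i,
      q i * (f (p i / q i) - f c - d * (p i / q i - c) - e * (p i / q i - c) ^ 2)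
        = q i * f (p i / q i) - f c * q i - d * (p i - c * q i)
          - e * ((p i - c * q i) ^ 2 / q i) := by
    intro i
    field_simp [hq i]
  rw [sum_congr rfl fun i _ => hterm i]
  simp only [sum_sub_distrib, ← mul_sum, hps, hqs, fDivergence]
  ring

variable {m M : ℝ}

theorem elr_sub_fDivergence_le_of_taylorRemainder_nonneg (f : ℝ → ℝ) (d e : ℝ) (hmM : m ≠ M)
    (hq : ∀ i, 0 < q i) (hps : ∑ i, p i = 1) (hqs : ∑ i, q i = 1)
    (hR : ∀ i, 0 ≤ f (p i / q i) - f M - d * (p i / q i - M) - e * (p i / q i - M) ^ 2) :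
    (M - 1) / (M - m) * f m + (1 - m) / (M - m) * f M - fDivergence f p q
      ≤ (M - 1) * (d - (f M - f m) / (M - m)) - e * ∑ i, (M * q i - p i) ^ 2 / q i := by
  have hsum := sum_nonneg fun i (_ : i ∈ univ) => mul_nonneg (hq i).le (hR i)
  rw [sum_mul_taylorRemainder_div f M d e (fun i => (hq i).ne') hps hqs] at hsum
  simp_rw [sub_sq_comm (M * q _)]
  have hchord : (M - 1) / (M - m) * f m + (1 - m) / (M - m) * f M
      = f M - (M - 1) * ((f M - f m) / (M - m)) := by
    field_simp [sub_ne_zero.2 hmM.symm]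
    ring
  rw [hchord]
  linarith

theorem le_elr_sub_fDivergence_of_taylorRemainder_nonpos (f : ℝ → ℝ) (d e : ℝ) (hmM : m ≠ M)
    (hq : ∀ i, 0 < q i) (hps : ∑ i, p i = 1) (hqs : ∑ i, q i = 1)
    (hR : ∀ i, f (p i / q i) - f m - d * (p i / q i - m) - e * (p i / q i - m) ^ 2 ≤ 0) :
    (1 - m) * ((f M - f m) / (M - m) - d) - e * ∑ i, (p i - m * q i) ^ 2 / q i
      ≤ (M - 1) / (M - m) * f m + (1 - m) / (M - m) * f M - fDivergence f p q := by
  have hsum := sum_nonpos fun i (_ : i ∈ univ) =>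
    mul_nonpos_of_nonneg_of_nonpos (hq i).le (hR i)
  rw [sum_mul_taylorRemainder_div f m d e (fun i => (hq i).ne') hps hqs] at hsum
  have hchord : (M - 1) / (M - m) * f m + (1 - m) / (M - m) * f M
      = f m + (1 - m) * ((f M - f m) / (M - m)) := by
    field_simp [sub_ne_zero.2 hmM.symm]
    ring
  rw [hchord]
  linarith

end fDivergence

noncomputable def hellingerFun (t : ℝ) : ℝ := 1 / 2 * (1 - √t) ^ 2

theorem hasDerivAt_hellingerFun {s : ℝ} (hs : 0 < s) :
    HasDerivAt hellingerFun (1 / 2 - s ^ (-1 / 2 : ℝ) / 2) s := by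
  refine ((((hasDerivAt_sqrt hs.ne').const_sub 1).pow 2).const_mul (1 / 2)).congr_deriv ?_
  have hsq : 0 < √s := sqrt_pos.2 hs
  rw [neg_div, rpow_neg hs.le, ← sqrt_eq_rpow]
  field_simp
  ring

theorem iteratedDeriv_three_hellingerFun {t : ℝ} (ht : 0 < t) :
    iteratedDeriv 3 hellingerFun t = -(3 / 8 * t ^ (-5 / 2 : ℝ)) := by
  have hd2 : ∀ s : ℝ, 0 < s →
      HasDerivAt (fun s : ℝ => 1 / 2 - s ^ (-1 / 2 : ℝ) / 2) (s ^ (-3 / 2 : ℝ) / 4) s :=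
    fun s hs => (((hasDerivAt_rpow_const (Or.inl hs.ne')).div_const 2).const_sub _).congr_deriv
      (by norm_num; ring)
  have hd3 : HasDerivAt (fun s : ℝ => s ^ (-3 / 2 : ℝ) / 4) (-(3 / 8 * t ^ (-5 / 2 : ℝ))) t :=
    ((hasDerivAt_rpow_const (Or.inl ht.ne')).div_const 4).congr_deriv (by norm_num; ring)
  have e1 : deriv hellingerFun =ᶠ[𝓝 t] fun s => 1 / 2 - s ^ (-1 / 2 : ℝ) / 2 :=
    eventually_of_mem (Ioi_mem_nhds ht) fun s hs => (hasDerivAt_hellingerFun hs).deriv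
  have e2 : deriv (deriv hellingerFun) =ᶠ[𝓝 t] fun s => s ^ (-3 / 2 : ℝ) / 4 := by
    filter_upwards [e1.eventuallyEq_nhds, Ioi_mem_nhds ht] with s hs hs0
    rw [hs.deriv_eq, (hd2 s hs0).deriv]
  rw [iteratedDeriv_succ, iteratedDeriv_succ, iteratedDeriv_one, e2.deriv_eq, hd3.deriv]

theorem iteratedDeriv_three_hellingerFun_neg {t : ℝ} (ht : 0 < t) :
    iteratedDeriv 3 hellingerFun t < 0 := by
  rw [iteratedDeriv_three_hellingerFun ht, neg_lt_zero]
  positivity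

-- The coefficients are `f'(c)` and `f''(c) / 2`, `f''(c) = c ^ (-3/2) / 4`.
theorem hellingerFun_taylorRemainder_eq {c t : ℝ} (hc : 0 < c) (ht : 0 ≤ t) :
    hellingerFun t - hellingerFun c - (1 / 2 - 1 / (2 * √c)) * (t - c)
        - 1 / (8 * c ^ ((3 : ℝ) / 2)) * (t - c) ^ 2
      = (√c - √t) ^ 3 * (3 * √c + √t) / (8 * √c ^ 3) := by
  rw [rpow_div_two_eq_sqrt _ hc.le, rpow_ofNat]
  obtain ⟨a, ha, rfl⟩ : ∃ a, 0 < a ∧ c = a ^ 2 := ⟨√c, sqrt_pos.2 hc, (sq_sqrt hc.le).symm⟩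
  obtain ⟨x, hx, rfl⟩ : ∃ x, 0 ≤ x ∧ t = x ^ 2 := ⟨√t, sqrt_nonneg t, (sq_sqrt ht).symm⟩
  simp only [hellingerFun, sqrt_sq ha.le, sqrt_sq hx]
  field_simp
  ring

theorem fDivergence_hellingerFun {ι : Type*} [Fintype ι] (p q : ι → ℝ) (hq : ∀ i, 0 < q i) :
    fDivergence hellingerFun p q = 1 / 2 * ∑ i, (√(q i) - √(p i)) ^ 2 := by
  rw [fDivergence, mul_sum]
  refine sum_congr rfl fun i _ => ?_
  have hsq : 0 < √(q i) := sqrt_pos.2 (hq i)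
  rw [hellingerFun, sqrt_div' _ (hq i).le]
  field_simp
  rw [sq_sqrt (hq i).le]

theorem hellingerFun_taylorRemainder_nonneg {c t : ℝ} (hc : 0 < c) (ht : 0 ≤ t)
    (htc : t ≤ c) :
    0 ≤ hellingerFun t - hellingerFun c - (1 / 2 - 1 / (2 * √c)) * (t - c)
        - 1 / (8 * c ^ ((3 : ℝ) / 2)) * (t - c) ^ 2 := by
  rw [hellingerFun_taylorRemainder_eq hc ht]
  have := sub_nonneg.2 (sqrt_le_sqrt htc)
  positivity

theorem hellingerFun_taylorRemainder_nonpos {c t : ℝ} (hc : 0 < c) (hct : c ≤ t) :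
    hellingerFun t - hellingerFun c - (1 / 2 - 1 / (2 * √c)) * (t - c)
        - 1 / (8 * c ^ ((3 : ℝ) / 2)) * (t - c) ^ 2 ≤ 0 := by
  rw [hellingerFun_taylorRemainder_eq hc (hc.le.trans hct)]
  have hcube : (√c - √t) ^ 3 ≤ 0 :=
    (Odd.pow_nonpos_iff (by decide)).2 (sub_nonpos.2 (sqrt_le_sqrt hct))
  exact div_nonpos_of_nonpos_of_nonneg
    (mul_nonpos_of_nonpos_of_nonneg hcube (by positivity)) (by positivity)

theorem elr_hellinger_general (n : ℕ) (p q : Fin n → ℝ)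
    (m M : ℝ) (hmM : m < M) (hm0 : 0 < m)
    (hq : ∀ i, 0 < q i)
    (hps : ∑ i, p i = 1) (hqs : ∑ i, q i = 1)
    (hratio : ∀ i, p i / q i ∈ Set.Icc m M) :
    (∀ t : ℝ, 0 < t →
        iteratedDeriv 3 (fun s : ℝ => 1 / 2 * (1 - Real.sqrt s) ^ 2) t < 0)
      ∧ (let f : ℝ → ℝ := fun s => 1 / 2 * (1 - Real.sqrt s) ^ 2
        let Δ := (f M - f m) / (M - m)
        (M - 1) * ((1 / 2 - 1 / (2 * Real.sqrt M)) - Δ)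
              - 1 / (8 * M ^ ((3 : ℝ) / 2)) * ∑ i, (M * q i - p i) ^ 2 / q i
            ≥ (M - 1) / (M - m) * (1 / 2 * (1 - Real.sqrt m) ^ 2)
                + (1 - m) / (M - m) * (1 / 2 * (1 - Real.sqrt M) ^ 2)
                - 1 / 2 * ∑ i, (Real.sqrt (q i) - Real.sqrt (p i)) ^ 2
          ∧ (M - 1) / (M - m) * (1 / 2 * (1 - Real.sqrt m) ^ 2)
                + (1 - m) / (M - m) * (1 / 2 * (1 - Real.sqrt M) ^ 2)
                - 1 / 2 * ∑ i, (Real.sqrt (q i) - Real.sqrt (p i)) ^ 2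
            ≥ (1 - m) * (Δ - (1 / 2 - 1 / (2 * Real.sqrt m)))
                - 1 / (8 * m ^ ((3 : ℝ) / 2)) * ∑ i, (p i - m * q i) ^ 2 / q i) := by
  have hratio_nonneg : ∀ i, 0 ≤ p i / q i := fun i => hm0.le.trans (hratio i).1
  rw [← fDivergence_hellingerFun p q hq]
  refine ⟨fun t ht => iteratedDeriv_three_hellingerFun_neg ht, ?_, ?_⟩
  · exact elr_sub_fDivergence_le_of_taylorRemainder_nonneg hellingerFun _ _ hmM.ne hq hps hqs
      fun i => hellingerFun_taylorRemainder_nonneg (hm0.trans hmM) (hratio_nonneg i)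
        (hratio i).2
  · exact le_elr_sub_fDivergence_of_taylorRemainder_nonpos hellingerFun _ _ hmM.ne hq hps hqs
      fun i => hellingerFun_taylorRemainder_nonpos hm0 (hratio i).1

/-- Hellinger divergence: the generating function `t ↦ (1/2)(1 − √t)²` has negative
third derivative on `(0,∞)`, and the Edmundson–Lah–Ribarič chain reverses
(Example 3.1 of the paper). -/
theorem elr_hellinger (n : ℕ) (p q : Fin n → ℝ)
    (m M : ℝ) (hmM : m < M) (hm0 : 0 < m) (hm1 : m ≤ 1) (h1M : 1 ≤ M)
    (hp : ∀ i, 0 ≤ p i) (hq : ∀ i, 0 < q i)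
    (hps : ∑ i, p i = 1) (hqs : ∑ i, q i = 1)
    (hratio : ∀ i, p i / q i ∈ Set.Icc m M) :
    (∀ t : ℝ, 0 < t →
        iteratedDeriv 3 (fun s : ℝ => 1 / 2 * (1 - Real.sqrt s) ^ 2) t < 0)
      ∧ (let f : ℝ → ℝ := fun s => 1 / 2 * (1 - Real.sqrt s) ^ 2
        let Δ := (f M - f m) / (M - m)
        (M - 1) * ((1 / 2 - 1 / (2 * Real.sqrt M)) - Δ)
              - 1 / (8 * M ^ ((3 : ℝ) / 2)) * ∑ i, (M * q i - p i) ^ 2 / q i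
            ≥ (M - 1) / (M - m) * (1 / 2 * (1 - Real.sqrt m) ^ 2)
                + (1 - m) / (M - m) * (1 / 2 * (1 - Real.sqrt M) ^ 2)
                - 1 / 2 * ∑ i, (Real.sqrt (q i) - Real.sqrt (p i)) ^ 2
          ∧ (M - 1) / (M - m) * (1 / 2 * (1 - Real.sqrt m) ^ 2)
                + (1 - m) / (M - m) * (1 / 2 * (1 - Real.sqrt M) ^ 2)
                - 1 / 2 * ∑ i, (Real.sqrt (q i) - Real.sqrt (p i)) ^ 2
            ≥ (1 - m) * (Δ - (1 / 2 - 1 / (2 * Real.sqrt m)))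
                - 1 / (8 * m ^ ((3 : ℝ) / 2)) * ∑ i, (p i - m * q i) ^ 2 / q i) :=
  elr_hellinger_general n p q m M hmM hm0 hq hps hqs hratio
end

section
/- Assume additionally 0 < m, and let α ≥ 2. The Rényi generating function f(t) = t^α satisfies f''' ≥ 0 on (0,∞), i.e. it is 3-convex, and hence, writing Δ = (M^α − m^α)/(M − m): (M − 1)·[α·M^{α−1} − Δ] − (α(α−1)·M^{α−2}/2)·∑_{i=1}^n (M·q_i − p_i)²/q_i ≤ (M − 1)/(M − m)·m^α + (1 − m)/(M − m)·M^α − ∑_{i=1}^n q_i^{1−α}·p_i^α ≤ (1 − m)·[Δ − α·m^{α−1}] − (α(α−1)·m^{α−2}/2)·∑_{i=1}^n (p_i − m·q_i)²/q_i. -/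
/-!
Since `f''(t) = α(α-1)t^(α-2)` is nondecreasing for `α ≥ 2` (this is the 3-convexity of `f`),
`f'` lies above its tangent lines, so `t^α` minus its second-order Taylor polynomial at any
`a > 0` is nondecreasing and vanishes at `a`. Applied at `a = m` and `a = M` to the ratios
`p_i/q_i ∈ [m, M]` and averaged with weights `q_i`, using `∑ q_i (p_i/q_i) = 1`, this gives
the two bounds on `∑ q_i (p_i/q_i)^α`, and the Edmundson–Lah–Ribarič chain is a rearrangement
of them.
-/

open Real Finset Set

lemma iteratedDeriv_three_rpow_const (α t : ℝ) :
    iteratedDeriv 3 (fun s : ℝ => s ^ α) t = α * (α - 1) * (α - 2) * t ^ (α - 3) := by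
  rw [iteratedDeriv_eq_iterate, iter_deriv_rpow_const]
  simp [descPochhammer_succ_right]

lemma rpow_add_mul_sub_le_rpow {β a t : ℝ} (hβ : 1 ≤ β) (ha : 0 < a) (ht : 0 ≤ t) :
    a ^ β + β * a ^ (β - 1) * (t - a) ≤ t ^ β := by
  have hbernoulli := one_add_mul_self_le_rpow_one_add
    (show -1 ≤ t / a - 1 by linarith [div_nonneg ht ha.le]) hβ
  rw [add_sub_cancel, div_rpow ht ha.le] at hbernoulli
  have haβ : 0 < a ^ β := rpow_pos_of_pos ha β
  calc a ^ β + β * a ^ (β - 1) * (t - a) = a ^ β * (1 + β * (t / a - 1)) := by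
        rw [rpow_sub_one ha.ne']; field_simp
    _ ≤ a ^ β * (t ^ β / a ^ β) := mul_le_mul_of_nonneg_left hbernoulli haβ.le
    _ = t ^ β := mul_div_cancel₀ _ haβ.ne'

noncomputable def rpowTaylor₂ (α a t : ℝ) : ℝ :=
  a ^ α + α * a ^ (α - 1) * (t - a) + α * (α - 1) * a ^ (α - 2) / 2 * (t - a) ^ 2

lemma rpowTaylor₂_self (α a : ℝ) : rpowTaylor₂ α a a = a ^ α := by
  simp [rpowTaylor₂]

lemma hasDerivAt_rpowTaylor₂ (α a t : ℝ) :
    HasDerivAt (rpowTaylor₂ α a)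
      (α * (a ^ (α - 1) + (α - 1) * a ^ (α - 2) * (t - a))) t := by
  have hlin : HasDerivAt (fun s => s - a) 1 t := (hasDerivAt_id' t).sub_const a
  have := ((hlin.const_mul (α * a ^ (α - 1))).const_add (a ^ α)).fun_add
    ((hlin.fun_pow 2).const_mul (α * (α - 1) * a ^ (α - 2) / 2))
  exact this.congr_deriv (by norm_num; ring)

lemma monotoneOn_rpow_sub_rpowTaylor₂ {α a : ℝ} (hα : 2 ≤ α) (ha : 0 < a) :
    MonotoneOn (fun t => t ^ α - rpowTaylor₂ α a t) (Ioi 0) := by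
  have hderiv : ∀ t ∈ Ioi (0 : ℝ), HasDerivAt (fun t => t ^ α - rpowTaylor₂ α a t)
      (α * (t ^ (α - 1) - (a ^ (α - 1) + (α - 1) * a ^ (α - 2) * (t - a)))) t := fun t ht =>
    ((hasDerivAt_rpow_const (Or.inl (ne_of_gt ht))).sub
      (hasDerivAt_rpowTaylor₂ α a t)).congr_deriv (by ring)
  refine monotoneOn_of_hasDerivWithinAt_nonneg (convex_Ioi 0)
    (fun t ht => (hderiv t ht).continuousAt.continuousWithinAt)
    (fun t ht => (hderiv t (interior_subset ht)).hasDerivWithinAt) fun t ht => ?_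
  rw [interior_Ioi] at ht
  have htangent := rpow_add_mul_sub_le_rpow (β := α - 1) (by linarith) ha (le_of_lt ht)
  rw [sub_sub, one_add_one_eq_two] at htangent
  exact mul_nonneg (by linarith) (sub_nonneg.2 htangent)

lemma rpowTaylor₂_le_rpow {α a t : ℝ} (hα : 2 ≤ α) (ha : 0 < a) (hat : a ≤ t) :
    rpowTaylor₂ α a t ≤ t ^ α := by
  have := monotoneOn_rpow_sub_rpowTaylor₂ hα ha (mem_Ioi.2 ha) (mem_Ioi.2 (ha.trans_le hat)) hat
  simp only [rpowTaylor₂_self, sub_self] at this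
  exact sub_nonneg.1 this

lemma rpow_le_rpowTaylor₂ {α a t : ℝ} (hα : 2 ≤ α) (ht : 0 < t) (hta : t ≤ a) :
    t ^ α ≤ rpowTaylor₂ α a t := by
  have := monotoneOn_rpow_sub_rpowTaylor₂ hα (ht.trans_le hta) (mem_Ioi.2 ht)
    (mem_Ioi.2 (ht.trans_le hta)) hta
  simp only [rpowTaylor₂_self, sub_self] at this
  exact sub_nonpos.1 this

section WeightedSums

variable {ι : Type*} [Fintype ι] (w x : ι → ℝ)

lemma sum_mul_rpowTaylor₂ (hw : ∑ i, w i = 1) (hwx : ∑ i, w i * x i = 1) (α a : ℝ) :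
    ∑ i, w i * rpowTaylor₂ α a (x i)
      = a ^ α + α * a ^ (α - 1) * (1 - a)
        + α * (α - 1) * a ^ (α - 2) / 2 * ∑ i, w i * (x i - a) ^ 2 := by
  simp only [rpowTaylor₂, mul_add, sum_add_distrib, mul_sub, sum_sub_distrib]
  simp only [mul_left_comm (w _), ← mul_sum, ← sum_mul, hw, hwx]
  ring

lemma sum_rpowTaylor₂_le_sum_rpow {α a : ℝ} (hα : 2 ≤ α) (ha : 0 < a)
    (hw0 : ∀ i, 0 ≤ w i) (hw : ∑ i, w i = 1) (hwx : ∑ i, w i * x i = 1) (hax : ∀ i, a ≤ x i) :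
    a ^ α + α * a ^ (α - 1) * (1 - a)
        + α * (α - 1) * a ^ (α - 2) / 2 * ∑ i, w i * (x i - a) ^ 2
      ≤ ∑ i, w i * x i ^ α := by
  rw [← sum_mul_rpowTaylor₂ w x hw hwx]
  exact sum_le_sum fun i _ =>
    mul_le_mul_of_nonneg_left (rpowTaylor₂_le_rpow hα ha (hax i)) (hw0 i)

lemma sum_rpow_le_sum_rpowTaylor₂ {α a : ℝ} (hα : 2 ≤ α) (hw0 : ∀ i, 0 ≤ w i)
    (hw : ∑ i, w i = 1) (hwx : ∑ i, w i * x i = 1) (hx0 : ∀ i, 0 < x i)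
    (hxa : ∀ i, x i ≤ a) :
    ∑ i, w i * x i ^ α
      ≤ a ^ α + α * a ^ (α - 1) * (1 - a)
        + α * (α - 1) * a ^ (α - 2) / 2 * ∑ i, w i * (x i - a) ^ 2 := by
  rw [← sum_mul_rpowTaylor₂ w x hw hwx]
  exact sum_le_sum fun i _ =>
    mul_le_mul_of_nonneg_left (rpow_le_rpowTaylor₂ hα (hx0 i) (hxa i)) (hw0 i)

end WeightedSums

lemma rpow_one_sub_mul_rpow {p q : ℝ} (hp : 0 ≤ p) (hq : 0 < q) (α : ℝ) :
    q ^ (1 - α) * p ^ α = q * (p / q) ^ α := by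
  rw [div_rpow hp hq.le, rpow_sub hq, rpow_one]
  field_simp

lemma sq_sub_div_eq_mul_sq {p q : ℝ} (hq : q ≠ 0) (a : ℝ) :
    (p - a * q) ^ 2 / q = q * (p / q - a) ^ 2 := by
  field_simp

theorem elr_renyi_general (n : ℕ) (p q : Fin n → ℝ)
    (m M : ℝ) (hmM : m < M) (hm0 : 0 < m)
    (hp : ∀ i, 0 ≤ p i) (hq : ∀ i, 0 < q i)
    (hps : ∑ i, p i = 1) (hqs : ∑ i, q i = 1)
    (hratio : ∀ i, p i / q i ∈ Set.Icc m M)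
    (α : ℝ) (hα : 2 ≤ α) :
    (∀ t : ℝ, 0 < t → 0 ≤ iteratedDeriv 3 (fun s : ℝ => s ^ α) t)
      ∧ (let Δ := (M ^ α - m ^ α) / (M - m)
        (M - 1) * (α * M ^ (α - 1) - Δ)
              - α * (α - 1) * M ^ (α - 2) / 2 * ∑ i, (M * q i - p i) ^ 2 / q i
            ≤ (M - 1) / (M - m) * m ^ α + (1 - m) / (M - m) * M ^ α
                - ∑ i, q i ^ (1 - α) * p i ^ α
          ∧ (M - 1) / (M - m) * m ^ α + (1 - m) / (M - m) * M ^ α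
                - ∑ i, q i ^ (1 - α) * p i ^ α
            ≤ (1 - m) * (Δ - α * m ^ (α - 1))
                - α * (α - 1) * m ^ (α - 2) / 2 * ∑ i, (p i - m * q i) ^ 2 / q i) := by
  refine ⟨fun t ht => ?_, ?_⟩
  · rw [iteratedDeriv_three_rpow_const]
    exact mul_nonneg (mul_nonneg (mul_nonneg (by linarith) (by linarith)) (by linarith))
      (rpow_nonneg ht.le _)
  set x : Fin n → ℝ := fun i => p i / q i
  have hq0 : ∀ i, 0 ≤ q i := fun i => (hq i).le
  have hqx : ∑ i, q i * x i = 1 := by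
    rw [← hps]; exact sum_congr rfl fun i _ => mul_div_cancel₀ _ (hq i).ne'
  have hrenyi : ∑ i, q i ^ (1 - α) * p i ^ α = ∑ i, q i * x i ^ α :=
    sum_congr rfl fun i _ => rpow_one_sub_mul_rpow (hp i) (hq i) α
  have hchi_m : ∑ i, (p i - m * q i) ^ 2 / q i = ∑ i, q i * (x i - m) ^ 2 :=
    sum_congr rfl fun i _ => sq_sub_div_eq_mul_sq (hq i).ne' m
  have hchi_M : ∑ i, (M * q i - p i) ^ 2 / q i = ∑ i, q i * (x i - M) ^ 2 :=
    sum_congr rfl fun i _ => by rw [← neg_sq, neg_sub]; exact sq_sub_div_eq_mul_sq (hq i).ne' M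
  have hlower := sum_rpowTaylor₂_le_sum_rpow q x hα hm0 hq0 hqs hqx fun i => (hratio i).1
  have hupper := sum_rpow_le_sum_rpowTaylor₂ q x hα hq0 hqs hqx
    (fun i => hm0.trans_le (hratio i).1) fun i => (hratio i).2
  have hMm : M - m ≠ 0 := sub_ne_zero.2 hmM.ne'
  have hchord_M : (M - 1) / (M - m) * m ^ α + (1 - m) / (M - m) * M ^ α
      = M ^ α - (M - 1) * ((M ^ α - m ^ α) / (M - m)) := by field_simp; ring
  have hchord_m : (M - 1) / (M - m) * m ^ α + (1 - m) / (M - m) * M ^ α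
      = m ^ α + (1 - m) * ((M ^ α - m ^ α) / (M - m)) := by field_simp; ring
  rw [hrenyi, hchi_m, hchi_M]
  exact ⟨by rw [hchord_M]; linarith, by rw [hchord_m]; linarith⟩

/-- Rényi divergence: for `α ≥ 2` the generating function `t ↦ t^α` is 3-convex on
`(0,∞)`, and the Edmundson–Lah–Ribarič chain holds (Example 3.1 of the paper). -/
theorem elr_renyi (n : ℕ) (p q : Fin n → ℝ)
    (m M : ℝ) (hmM : m < M) (hm0 : 0 < m) (hm1 : m ≤ 1) (h1M : 1 ≤ M)
    (hp : ∀ i, 0 ≤ p i) (hq : ∀ i, 0 < q i)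
    (hps : ∑ i, p i = 1) (hqs : ∑ i, q i = 1)
    (hratio : ∀ i, p i / q i ∈ Set.Icc m M)
    (α : ℝ) (hα : 2 ≤ α) :
    (∀ t : ℝ, 0 < t → 0 ≤ iteratedDeriv 3 (fun s : ℝ => s ^ α) t)
      ∧ (let Δ := (M ^ α - m ^ α) / (M - m)
        (M - 1) * (α * M ^ (α - 1) - Δ)
              - α * (α - 1) * M ^ (α - 2) / 2 * ∑ i, (M * q i - p i) ^ 2 / q i
            ≤ (M - 1) / (M - m) * m ^ α + (1 - m) / (M - m) * M ^ α
                - ∑ i, q i ^ (1 - α) * p i ^ α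
          ∧ (M - 1) / (M - m) * m ^ α + (1 - m) / (M - m) * M ^ α
                - ∑ i, q i ^ (1 - α) * p i ^ α
            ≤ (1 - m) * (Δ - α * m ^ (α - 1))
                - α * (α - 1) * m ^ (α - 2) / 2 * ∑ i, (p i - m * q i) ^ 2 / q i) :=
  elr_renyi_general n p q m M hmM hm0 hp hq hps hqs hratio α hα
end

section
/- Assume additionally 0 < m. For the Jeffreys generating function f(t) = (1 − t)·ln(1/t) = (t − 1)·ln t one has f'''(t) = −1/t² − 2/t³ < 0 on (0,∞), so −f is 3-convex and the Edmundson–Lah–Ribarič chain reverses: writing Δ = (f(M) − f(m))/(M − m) with f as above, (M − 1)·[(ln M − 1/M + 1) − Δ] − ((1/M + 1/M²)/2)·∑_{i=1}^n (M·q_i − p_i)²/q_i ≥ (M − 1)/(M − m)·(m − 1)ln m + (1 − m)/(M − m)·(M − 1)ln M − ∑_{i=1}^n (p_i − q_i)·ln(p_i/q_i) ≥ (1 − m)·[Δ − (ln m − 1/m + 1)] − ((1/m + 1/m²)/2)·∑_{i=1}^n (p_i − m·q_i)²/q_i. -/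
/-!
The Jeffreys generator `f t = (t - 1) * log t` has `f'' t = 1 / t + 1 / t ^ 2`, which decreases
on `(0, ∞)`. So on `[m, ∞)` the second-order Taylor polynomial of `f` at `m`, with `f'' m` as
curvature, lies above `f`, and on `(0, M]` the one at `M`, with `f'' M`, lies below `f`.
Evaluating at `p i / q i`, weighting by `q i` and using `∑ p = ∑ q = 1` bounds the divergence
from both sides; the chord of `f` over `[m, M]`, evaluated at `1`, rewrites the two bounds as the
stated chain.
-/

open Real Set Topology

lemma ConvexOn.add_mul_sub_le_of_hasDerivAt {S : Set ℝ} {g : ℝ → ℝ} {g' a x : ℝ}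
    (hg : ConvexOn ℝ S g) (ha : a ∈ S) (hx : x ∈ S) (hd : HasDerivAt g g' a) :
    g a + g' * (x - a) ≤ g x := by
  rcases lt_trichotomy x a with hxa | rfl | hax
  · have h := hg.slope_le_of_hasDerivAt hx ha hxa hd
    rw [slope_def_field, div_le_iff₀ (sub_pos.2 hxa)] at h
    linarith
  · simp
  · have h := hg.le_slope_of_hasDerivAt ha hx hax hd
    rw [slope_def_field, le_div_iff₀ (sub_pos.2 hax)] at h
    linarith

section Taylor

variable {S : Set ℝ} {f f' f'' : ℝ → ℝ} {a x c : ℝ}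

lemma taylor_two_le_of_le_deriv2 (hS : Convex ℝ S) (hf : ∀ y ∈ S, HasDerivAt f (f' y) y)
    (hf' : ∀ y ∈ S, HasDerivAt f' (f'' y) y) (hc : ∀ y ∈ S, c ≤ f'' y) (ha : a ∈ S)
    (hx : x ∈ S) : f a + f' a * (x - a) + c / 2 * (x - a) ^ 2 ≤ f x := by
  have hg (y : ℝ) (hy : y ∈ S) :
      HasDerivAt (fun z => f z - c / 2 * (z - a) ^ 2) (f' y - c * (y - a)) y :=
    ((hf y hy).sub ((((hasDerivAt_id y).sub_const a).pow 2).const_mul (c / 2))).congr_deriv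
      (by simp only [id]; ring)
  have hg' (y : ℝ) (hy : y ∈ S) : HasDerivAt (fun z => f' z - c * (z - a)) (f'' y - c) y :=
    ((hf' y hy).sub (((hasDerivAt_id y).sub_const a).const_mul c)).congr_deriv (by simp)
  have hconv : ConvexOn ℝ S fun z => f z - c / 2 * (z - a) ^ 2 :=
    convexOn_of_hasDerivWithinAt2_nonneg hS
      (fun y hy => (hg y hy).continuousAt.continuousWithinAt)
      (fun y hy => (hg y (interior_subset hy)).hasDerivWithinAt)
      (fun y hy => (hg' y (interior_subset hy)).hasDerivWithinAt)
      (fun y hy => sub_nonneg.2 (hc y (interior_subset hy)))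
  have h := hconv.add_mul_sub_le_of_hasDerivAt ha hx (hg a ha)
  simp only [sub_self] at h
  linarith

lemma le_taylor_two_of_deriv2_le (hS : Convex ℝ S) (hf : ∀ y ∈ S, HasDerivAt f (f' y) y)
    (hf' : ∀ y ∈ S, HasDerivAt f' (f'' y) y) (hc : ∀ y ∈ S, f'' y ≤ c) (ha : a ∈ S)
    (hx : x ∈ S) : f x ≤ f a + f' a * (x - a) + c / 2 * (x - a) ^ 2 := by
  have h := taylor_two_le_of_le_deriv2 (f := -f) (f' := -f') (f'' := -f'') (c := -c) hS
    (fun y hy => (hf y hy).neg) (fun y hy => (hf' y hy).neg) (fun y hy => neg_le_neg (hc y hy))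
    ha hx
  simp only [Pi.neg_apply] at h
  linarith

end Taylor

section Perspective

variable {ι : Type*} [Fintype ι] {p q : ι → ℝ}

lemma sum_mul_quadratic_div (hq : ∀ i, q i ≠ 0) (hps : ∑ i, p i = 1) (hqs : ∑ i, q i = 1)
    (A B C a : ℝ) :
    ∑ i, q i * (A + B * (p i / q i - a) + C * (p i / q i - a) ^ 2)
      = A + B * (1 - a) + C * ∑ i, (p i - a * q i) ^ 2 / q i := by
  have hterm (i : ι) : q i * (A + B * (p i / q i - a) + C * (p i / q i - a) ^ 2)
      = A * q i + B * p i - B * a * q i + C * ((p i - a * q i) ^ 2 / q i) := by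
    have := hq i
    field_simp
    ring
  simp only [hterm, Finset.sum_add_distrib, Finset.sum_sub_distrib, ← Finset.mul_sum, hps, hqs]
  ring

variable {φ : ℝ → ℝ} {A B C a : ℝ}

lemma sum_mul_le_of_le_quadratic (hq : ∀ i, 0 < q i) (hps : ∑ i, p i = 1)
    (hqs : ∑ i, q i = 1)
    (hφ : ∀ i, φ (p i / q i) ≤ A + B * (p i / q i - a) + C * (p i / q i - a) ^ 2) :
    ∑ i, q i * φ (p i / q i) ≤ A + B * (1 - a) + C * ∑ i, (p i - a * q i) ^ 2 / q i := by
  rw [← sum_mul_quadratic_div (fun i => (hq i).ne') hps hqs]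
  exact Finset.sum_le_sum fun i _ => mul_le_mul_of_nonneg_left (hφ i) (hq i).le

lemma le_sum_mul_of_quadratic_le (hq : ∀ i, 0 < q i) (hps : ∑ i, p i = 1)
    (hqs : ∑ i, q i = 1)
    (hφ : ∀ i, A + B * (p i / q i - a) + C * (p i / q i - a) ^ 2 ≤ φ (p i / q i)) :
    A + B * (1 - a) + C * ∑ i, (p i - a * q i) ^ 2 / q i ≤ ∑ i, q i * φ (p i / q i) := by
  rw [← sum_mul_quadratic_div (fun i => (hq i).ne') hps hqs]
  exact Finset.sum_le_sum fun i _ => mul_le_mul_of_nonneg_left (hφ i) (hq i).le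

lemma sum_sub_mul_log_div_eq (hq : ∀ i, q i ≠ 0) :
    ∑ i, (p i - q i) * log (p i / q i) = ∑ i, q i * ((p i / q i - 1) * log (p i / q i)) := by
  refine Finset.sum_congr rfl fun i _ => ?_
  have := hq i
  field_simp

end Perspective

section Jeffreys

variable {x : ℝ}

lemma hasDerivAt_sub_one_mul_log (hx : x ≠ 0) :
    HasDerivAt (fun s => (s - 1) * log s) (log x + 1 - 1 / x) x :=
  (((hasDerivAt_id x).sub_const 1).mul (hasDerivAt_log hx)).congr_deriv <| by
    simp only [id]
    field_simp
    ring

lemma hasDerivAt_log_add_one_sub_inv (hx : x ≠ 0) :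
    HasDerivAt (fun s => log s + 1 - 1 / s) (1 / x + 1 / x ^ 2) x := by
  simp only [one_div]
  exact (((hasDerivAt_log hx).add_const 1).sub (hasDerivAt_inv hx)).congr_deriv (by ring)

lemma hasDerivAt_inv_add_inv_sq (hx : x ≠ 0) :
    HasDerivAt (fun s => 1 / s + 1 / s ^ 2) (-1 / x ^ 2 - 2 / x ^ 3) x := by
  simp only [one_div]
  refine ((hasDerivAt_inv hx).add ((hasDerivAt_pow 2 x).inv (pow_ne_zero 2 hx))).congr_deriv ?_
  field_simp
  ring

lemma iteratedDeriv_three_sub_one_mul_log (hx : x ≠ 0) :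
    iteratedDeriv 3 (fun s => (s - 1) * log s) x = -1 / x ^ 2 - 2 / x ^ 3 := by
  have h1 : deriv (fun s => (s - 1) * log s) =ᶠ[𝓝 x] fun s => log s + 1 - 1 / s :=
    (eventually_ne_nhds hx).mono fun s hs => (hasDerivAt_sub_one_mul_log hs).deriv
  have h2 : deriv (deriv fun s => (s - 1) * log s) =ᶠ[𝓝 x] fun s => 1 / s + 1 / s ^ 2 := by
    filter_upwards [eventually_ne_nhds hx, h1.eventuallyEq_nhds] with s hs h1s
    rw [h1s.deriv_eq, (hasDerivAt_log_add_one_sub_inv hs).deriv]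
  rw [iteratedDeriv_succ, iteratedDeriv_succ, iteratedDeriv_one, h2.deriv_eq,
    (hasDerivAt_inv_add_inv_sq hx).deriv]

lemma sub_one_mul_log_le_taylor_two {m : ℝ} (hm : 0 < m) (hx : m ≤ x) :
    (x - 1) * log x
      ≤ (m - 1) * log m + (log m + 1 - 1 / m) * (x - m) + (1 / m + 1 / m ^ 2) / 2 * (x - m) ^ 2 :=
  le_taylor_two_of_deriv2_le (f := fun s => (s - 1) * log s) (convex_Ici m)
    (fun y hy => hasDerivAt_sub_one_mul_log (hm.trans_le hy).ne')
    (fun y hy => hasDerivAt_log_add_one_sub_inv (hm.trans_le hy).ne')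
    (fun y hy => add_le_add (one_div_le_one_div_of_le hm hy)
      (one_div_le_one_div_of_le (by positivity) (pow_le_pow_left₀ hm.le hy 2)))
    self_mem_Ici hx

lemma taylor_two_le_sub_one_mul_log {M : ℝ} (hx : 0 < x) (hxM : x ≤ M) :
    (M - 1) * log M + (log M + 1 - 1 / M) * (x - M) + (1 / M + 1 / M ^ 2) / 2 * (x - M) ^ 2
      ≤ (x - 1) * log x :=
  taylor_two_le_of_le_deriv2 (f := fun s => (s - 1) * log s) (convex_Ioc 0 M)
    (fun y hy => hasDerivAt_sub_one_mul_log hy.1.ne')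
    (fun y hy => hasDerivAt_log_add_one_sub_inv hy.1.ne')
    (fun y hy => add_le_add (one_div_le_one_div_of_le hy.1 hy.2)
      (one_div_le_one_div_of_le (by have := hy.1; positivity) (pow_le_pow_left₀ hy.1.le hy.2 2)))
    (right_mem_Ioc.2 (hx.trans_le hxM)) ⟨hx, hxM⟩

end Jeffreys

theorem elr_jeffreys_general (n : ℕ) (p q : Fin n → ℝ)
    (m M : ℝ) (hmM : m < M) (hm0 : 0 < m)
    (hq : ∀ i, 0 < q i)
    (hps : ∑ i, p i = 1) (hqs : ∑ i, q i = 1)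
    (hratio : ∀ i, p i / q i ∈ Set.Icc m M) :
    (∀ t : ℝ, 0 < t →
        iteratedDeriv 3 (fun s : ℝ => (s - 1) * Real.log s) t = -1 / t ^ 2 - 2 / t ^ 3
          ∧ iteratedDeriv 3 (fun s : ℝ => (s - 1) * Real.log s) t < 0)
      ∧ (let f : ℝ → ℝ := fun s => (s - 1) * Real.log s
        let Δ := (f M - f m) / (M - m)
        (M - 1) * ((Real.log M - 1 / M + 1) - Δ)
              - (1 / M + 1 / M ^ 2) / 2 * ∑ i, (M * q i - p i) ^ 2 / q i
            ≥ (M - 1) / (M - m) * ((m - 1) * Real.log m)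
                + (1 - m) / (M - m) * ((M - 1) * Real.log M)
                - ∑ i, (p i - q i) * Real.log (p i / q i)
          ∧ (M - 1) / (M - m) * ((m - 1) * Real.log m)
                + (1 - m) / (M - m) * ((M - 1) * Real.log M)
                - ∑ i, (p i - q i) * Real.log (p i / q i)
            ≥ (1 - m) * (Δ - (Real.log m - 1 / m + 1))
                - (1 / m + 1 / m ^ 2) / 2 * ∑ i, (p i - m * q i) ^ 2 / q i) := by
  refine ⟨fun t ht => ⟨iteratedDeriv_three_sub_one_mul_log ht.ne', ?_⟩, ?_⟩
  · rw [iteratedDeriv_three_sub_one_mul_log ht.ne', show -1 / t ^ 2 - 2 / t ^ 3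
      = -(1 / t ^ 2 + 2 / t ^ 3) by ring]
    exact neg_neg_of_pos (by positivity)
  intro f Δ
  have hupper := sum_mul_le_of_le_quadratic (φ := fun s => (s - 1) * log s) hq hps hqs
    fun i => sub_one_mul_log_le_taylor_two hm0 (hratio i).1
  have hlower := le_sum_mul_of_quadratic_le (φ := fun s => (s - 1) * log s) hq hps hqs
    fun i => taylor_two_le_sub_one_mul_log (hm0.trans_le (hratio i).1) (hratio i).2
  rw [← sum_sub_mul_log_div_eq fun i => (hq i).ne'] at hupper hlower
  have hsq : ∑ i, (M * q i - p i) ^ 2 / q i = ∑ i, (p i - M * q i) ^ 2 / q i := by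
    simp_rw [sub_sq_comm (M * q _)]
  have hMm : M - m ≠ 0 := (sub_pos.2 hmM).ne'
  have hchord_m : (M - 1) / (M - m) * ((m - 1) * log m) + (1 - m) / (M - m) * ((M - 1) * log M)
      = (m - 1) * log m + (1 - m) * Δ := by
    simp only [Δ, f]; field_simp; ring
  have hchord_M : (M - 1) / (M - m) * ((m - 1) * log m) + (1 - m) / (M - m) * ((M - 1) * log M)
      = (M - 1) * log M + (1 - M) * Δ := by
    simp only [Δ, f]; field_simp; ring
  constructor
  · linear_combination hlower + hchord_M + (1 / M + 1 / M ^ 2) / 2 * hsq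
  · linear_combination hupper - hchord_m

/-- Jeffreys divergence: the generating function `t ↦ (t − 1)·ln t` satisfies
`f'''(t) = −1/t² − 2/t³ < 0` on `(0,∞)`, so `−f` is 3-convex and the
Edmundson–Lah–Ribarič chain reverses (Example 3.1 of the paper). -/
theorem elr_jeffreys (n : ℕ) (p q : Fin n → ℝ)
    (m M : ℝ) (hmM : m < M) (hm0 : 0 < m) (hm1 : m ≤ 1) (h1M : 1 ≤ M)
    (hp : ∀ i, 0 ≤ p i) (hq : ∀ i, 0 < q i)
    (hps : ∑ i, p i = 1) (hqs : ∑ i, q i = 1)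
    (hratio : ∀ i, p i / q i ∈ Set.Icc m M) :
    (∀ t : ℝ, 0 < t →
        iteratedDeriv 3 (fun s : ℝ => (s - 1) * Real.log s) t = -1 / t ^ 2 - 2 / t ^ 3
          ∧ iteratedDeriv 3 (fun s : ℝ => (s - 1) * Real.log s) t < 0)
      ∧ (let f : ℝ → ℝ := fun s => (s - 1) * Real.log s
        let Δ := (f M - f m) / (M - m)
        (M - 1) * ((Real.log M - 1 / M + 1) - Δ)
              - (1 / M + 1 / M ^ 2) / 2 * ∑ i, (M * q i - p i) ^ 2 / q i
            ≥ (M - 1) / (M - m) * ((m - 1) * Real.log m)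
                + (1 - m) / (M - m) * ((M - 1) * Real.log M)
                - ∑ i, (p i - q i) * Real.log (p i / q i)
          ∧ (M - 1) / (M - m) * ((m - 1) * Real.log m)
                + (1 - m) / (M - m) * ((M - 1) * Real.log M)
                - ∑ i, (p i - q i) * Real.log (p i / q i)
            ≥ (1 - m) * (Δ - (Real.log m - 1 / m + 1))
                - (1 / m + 1 / m ^ 2) / 2 * ∑ i, (p i - m * q i) ^ 2 / q i) :=
  elr_jeffreys_general n p q m M hmM hm0 hq hps hqs hratio
end

section
/- Let p and r be the Zipf–Mandelbrot distributions with parameters (N, q₁, s₁) and (N, q₂, s₂) respectively, let m = min_{1≤i≤N} p_i/r_i and M = max_{1≤i≤N} p_i/r_i, and assume m < M. Let f : ℝ → ℝ be three times continuously differentiable on an open interval containing [m,M] with f''' ≥ 0 there (f is 3-convex). Then, writing Δ = (f(M) − f(m))/(M − m): (M − 1)·[f'(M) − Δ] − (f''(M)/2)·∑_{i=1}^N (M·r_i − p_i)²/r_i ≤ (M − 1)/(M − m)·f(m) + (1 − m)/(M − m)·f(M) − ∑_{i=1}^N r_i·f(p_i/r_i) ≤ (1 − m)·[Δ − f'(m)]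 − (f''(m)/2)·∑_{i=1}^N (p_i − m·r_i)²/r_i. -/
/-!
By Taylor's theorem with Lagrange remainder, `f''' ≥ 0` puts `f` above its quadratic Taylor
polynomial at `m` on `[m, M]` and below the one at `M`. Writing the chord of `f` over `[m, M]`
once as `f m + (x - m) Δ` and once as `f M - (M - x) Δ` turns these into two-sided bounds on the
gap between chord and graph at every `x ∈ [m, M]`. Weighting the gap at `p i / r i` by `r i` and
summing, with `∑ p = ∑ r = 1`, gives both inequalities.
-/

open Finset Set

section Taylor

variable {f : ℝ → ℝ} {a b c x : ℝ}

theorem exists_taylor_two_lagrange (hf : ContDiffOn ℝ 3 f (Ioo a b)) (hc : c ∈ Ioo a b)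
    (hx : x ∈ Ioo a b) :
    ∃ ξ ∈ Ioo a b, f x = f c + deriv f c * (x - c) + iteratedDeriv 2 f c / 2 * (x - c) ^ 2
      + iteratedDeriv 3 f ξ * (x - c) ^ 3 / 6 := by
  rcases eq_or_ne c x with rfl | hcx
  · exact ⟨c, hc, by ring⟩
  have hsub : uIcc c x ⊆ Ioo a b := ordConnected_Ioo.uIcc_subset hc hx
  obtain ⟨ξ, hξ, h⟩ := taylor_mean_remainder_lagrange_iteratedDeriv (n := 2) hcx (hf.mono hsub)
  have hderiv (k : ℕ) (hk : k ≤ 3) : iteratedDerivWithin k f (uIcc c x) c = iteratedDeriv k f c :=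
    iteratedDerivWithin_eq_iteratedDeriv (uniqueDiffOn_uIcc hcx)
      ((hf.contDiffAt (isOpen_Ioo.mem_nhds hc)).of_le (by exact_mod_cast hk)) left_mem_uIcc
  refine ⟨ξ, hsub (uIoo_subset_uIcc_self hξ), ?_⟩
  simp only [taylor_within_apply, sum_range_succ, sum_range_zero, hderiv 0 (by norm_num),
    hderiv 1 (by norm_num), hderiv 2 (by norm_num), iteratedDeriv_zero, iteratedDeriv_one] at h
  norm_num [Nat.factorial] at h
  linarith

theorem taylor_two_le_of_le_s16 (hf : ContDiffOn ℝ 3 f (Ioo a b))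
    (hf3 : ∀ y ∈ Ioo a b, 0 ≤ iteratedDeriv 3 f y) (hc : c ∈ Ioo a b) (hx : x ∈ Ioo a b)
    (hcx : c ≤ x) :
    f c + deriv f c * (x - c) + iteratedDeriv 2 f c / 2 * (x - c) ^ 2 ≤ f x := by
  obtain ⟨ξ, hξ, h⟩ := exists_taylor_two_lagrange hf hc hx
  have : 0 ≤ iteratedDeriv 3 f ξ * (x - c) ^ 3 := mul_nonneg (hf3 ξ hξ) (by positivity)
  linarith

theorem le_taylor_two_of_le_s16 (hf : ContDiffOn ℝ 3 f (Ioo a b))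
    (hf3 : ∀ y ∈ Ioo a b, 0 ≤ iteratedDeriv 3 f y) (hc : c ∈ Ioo a b) (hx : x ∈ Ioo a b)
    (hxc : x ≤ c) :
    f x ≤ f c + deriv f c * (x - c) + iteratedDeriv 2 f c / 2 * (x - c) ^ 2 := by
  obtain ⟨ξ, hξ, h⟩ := exists_taylor_two_lagrange hf hc hx
  have : iteratedDeriv 3 f ξ * (x - c) ^ 3 ≤ 0 :=
    mul_nonpos_of_nonneg_of_nonpos (hf3 ξ hξ)
      ((Odd.pow_nonpos_iff ⟨1, rfl⟩).2 (sub_nonpos.2 hxc))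
  linarith

end Taylor

noncomputable def chordGap (f : ℝ → ℝ) (m M x : ℝ) : ℝ :=
  (M - x) / (M - m) * f m + (x - m) / (M - m) * f M - f x

section ChordGap

variable {f : ℝ → ℝ} {a b m M x : ℝ}

theorem le_chordGap (hf : ContDiffOn ℝ 3 f (Ioo a b))
    (hf3 : ∀ y ∈ Ioo a b, 0 ≤ iteratedDeriv 3 f y) (ham : a < m) (hMb : M < b) (hmM : m < M)
    (hx : x ∈ Icc m M) :
    (x - M) * ((f M - f m) / (M - m) - deriv f M) - iteratedDeriv 2 f M / 2 * (x - M) ^ 2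
      ≤ chordGap f m M x := by
  have hT := le_taylor_two_of_le_s16 hf hf3 (c := M) ⟨ham.trans hmM, hMb⟩
    ⟨ham.trans_le hx.1, hx.2.trans_lt hMb⟩ hx.2
  have hchord : chordGap f m M x = f M - (M - x) * ((f M - f m) / (M - m)) - f x := by
    unfold chordGap
    field_simp [(sub_pos.2 hmM).ne']
    ring
  rw [hchord]
  linarith

theorem chordGap_le (hf : ContDiffOn ℝ 3 f (Ioo a b))
    (hf3 : ∀ y ∈ Ioo a b, 0 ≤ iteratedDeriv 3 f y) (ham : a < m) (hMb : M < b) (hmM : m < M)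
    (hx : x ∈ Icc m M) :
    chordGap f m M x
      ≤ (x - m) * ((f M - f m) / (M - m) - deriv f m) - iteratedDeriv 2 f m / 2 * (x - m) ^ 2 := by
  have hT := taylor_two_le_of_le_s16 hf hf3 (c := m) ⟨ham, hmM.trans hMb⟩
    ⟨ham.trans_le hx.1, hx.2.trans_lt hMb⟩ hx.1
  have hchord : chordGap f m M x = f m + (x - m) * ((f M - f m) / (M - m)) - f x := by
    unfold chordGap
    field_simp [(sub_pos.2 hmM).ne']
    ring
  rw [hchord]
  linarith

end ChordGap

section Weighted

variable {ι : Type*} [Fintype ι] {p r : ι → ℝ}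

theorem sum_mul_chordGap (f : ℝ → ℝ) (m M : ℝ) (hr : ∀ i, r i ≠ 0) (hp1 : ∑ i, p i = 1)
    (hr1 : ∑ i, r i = 1) :
    ∑ i, r i * chordGap f m M (p i / r i)
      = (M - 1) / (M - m) * f m + (1 - m) / (M - m) * f M - ∑ i, r i * f (p i / r i) := by
  have hterm (i : ι) : r i * chordGap f m M (p i / r i) = (M * r i - p i) / (M - m) * f m
      + (p i - m * r i) / (M - m) * f M - r i * f (p i / r i) := by
    unfold chordGap
    field_simp [hr i]
  simp only [hterm, sum_sub_distrib, sum_add_distrib, ← sum_mul, ← sum_div, ← mul_sum, hp1, hr1,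
    mul_one]

theorem sum_mul_sub_mul_sub_sq (hr : ∀ i, r i ≠ 0) (c K L : ℝ) :
    ∑ i, r i * ((p i / r i - c) * K - L * (p i / r i - c) ^ 2)
      = (∑ i, p i - c * ∑ i, r i) * K - L * ∑ i, (p i - c * r i) ^ 2 / r i := by
  have hterm (i : ι) : r i * ((p i / r i - c) * K - L * (p i / r i - c) ^ 2)
      = (p i - c * r i) * K - L * ((p i - c * r i) ^ 2 / r i) := by
    field_simp [hr i]
  simp only [hterm, sum_sub_distrib, ← sum_mul, ← mul_sum]

end Weighted

theorem edmundson_lah_ribaric_three_convex {ι : Type*} [Fintype ι] {p r : ι → ℝ} {f : ℝ → ℝ}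
    {a b m M : ℝ} (hr : ∀ i, 0 < r i) (hp1 : ∑ i, p i = 1) (hr1 : ∑ i, r i = 1)
    (hm : ∀ i, m ≤ p i / r i) (hM : ∀ i, p i / r i ≤ M) (hmM : m < M) (ham : a < m)
    (hMb : M < b) (hf : ContDiffOn ℝ 3 f (Ioo a b))
    (hf3 : ∀ x ∈ Ioo a b, 0 ≤ iteratedDeriv 3 f x) :
    (M - 1) * (deriv f M - (f M - f m) / (M - m))
          - iteratedDeriv 2 f M / 2 * ∑ i, (M * r i - p i) ^ 2 / r i
        ≤ (M - 1) / (M - m) * f m + (1 - m) / (M - m) * f M - ∑ i, r i * f (p i / r i)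
      ∧ (M - 1) / (M - m) * f m + (1 - m) / (M - m) * f M - ∑ i, r i * f (p i / r i)
        ≤ (1 - m) * ((f M - f m) / (M - m) - deriv f m)
            - iteratedDeriv 2 f m / 2 * ∑ i, (p i - m * r i) ^ 2 / r i := by
  have hr0 (i : ι) : r i ≠ 0 := (hr i).ne'
  have hx (i : ι) : p i / r i ∈ Icc m M := ⟨hm i, hM i⟩
  rw [← sum_mul_chordGap f m M hr0 hp1 hr1]
  constructor
  · calc (M - 1) * (deriv f M - (f M - f m) / (M - m))
          - iteratedDeriv 2 f M / 2 * ∑ i, (M * r i - p i) ^ 2 / r i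
        = ∑ i, r i * ((p i / r i - M) * ((f M - f m) / (M - m) - deriv f M)
            - iteratedDeriv 2 f M / 2 * (p i / r i - M) ^ 2) := by
          simp only [sum_mul_sub_mul_sub_sq hr0, hp1, hr1, sub_sq_comm (M * r _)]
          ring
      _ ≤ ∑ i, r i * chordGap f m M (p i / r i) := by
          gcongr with i
          · exact (hr i).le
          · exact le_chordGap hf hf3 ham hMb hmM (hx i)
  · calc ∑ i, r i * chordGap f m M (p i / r i)
        ≤ ∑ i, r i * ((p i / r i - m) * ((f M - f m) / (M - m) - deriv f m)
            - iteratedDeriv 2 f m / 2 * (p i / r i - m) ^ 2) := by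
          gcongr with i
          · exact (hr i).le
          · exact chordGap_le hf hf3 ham hMb hmM (hx i)
      _ = (1 - m) * ((f M - f m) / (M - m) - deriv f m)
            - iteratedDeriv 2 f m / 2 * ∑ i, (p i - m * r i) ^ 2 / r i := by
          rw [sum_mul_sub_mul_sub_sq hr0, hp1, hr1, mul_one]

section Normalization

variable {ι : Type*} [Fintype ι] {u : ι → ℝ}

theorem one_div_mul_sum_one_div_pos (hu : ∀ i, 0 < u i) (i : ι) :
    0 < 1 / (u i * ∑ j, 1 / u j) :=
  have : 0 < ∑ j, 1 / u j := sum_pos (fun j _ => one_div_pos.2 (hu j)) ⟨i, mem_univ i⟩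
  by positivity [hu i]

theorem sum_one_div_mul_sum_one_div [Nonempty ι] (hu : ∀ i, 0 < u i) :
    ∑ i, 1 / (u i * ∑ j, 1 / u j) = 1 := by
  have hsum : ∑ j, 1 / u j ≠ 0 := (sum_pos (fun j _ => one_div_pos.2 (hu j)) univ_nonempty).ne'
  simp only [← div_div, ← sum_div, div_self hsum]

end Normalization

theorem elr_zipf_mandelbrot_tm3_general (N : ℕ)
    (q₁ q₂ s₁ s₂ : ℝ) (hq₁ : 0 ≤ q₁) (hq₂ : 0 ≤ q₂)
    (p r : Fin N → ℝ)
    (hp : ∀ i : Fin N, p i =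
      1 / ((((i : ℕ) : ℝ) + 1 + q₁) ^ s₁
        * ∑ j : Fin N, 1 / ((((j : ℕ) : ℝ) + 1 + q₁) ^ s₁)))
    (hr : ∀ i : Fin N, r i =
      1 / ((((i : ℕ) : ℝ) + 1 + q₂) ^ s₂
        * ∑ j : Fin N, 1 / ((((j : ℕ) : ℝ) + 1 + q₂) ^ s₂)))
    (m M : ℝ)
    (hm : IsLeast (Set.range fun i : Fin N => p i / r i) m)
    (hM : IsGreatest (Set.range fun i : Fin N => p i / r i) M)
    (hmM : m < M)
    (f : ℝ → ℝ) (a b : ℝ) (ham : a < m) (hMb : M < b)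
    (hf : ContDiffOn ℝ 3 f (Set.Ioo a b))
    (hf3 : ∀ x ∈ Set.Ioo a b, 0 ≤ iteratedDeriv 3 f x) :
    let Δ := (f M - f m) / (M - m)
    (M - 1) * (deriv f M - Δ)
          - iteratedDeriv 2 f M / 2 * ∑ i, (M * r i - p i) ^ 2 / r i
        ≤ (M - 1) / (M - m) * f m + (1 - m) / (M - m) * f M
            - ∑ i, r i * f (p i / r i)
      ∧ (M - 1) / (M - m) * f m + (1 - m) / (M - m) * f M
            - ∑ i, r i * f (p i / r i)
        ≤ (1 - m) * (Δ - deriv f m)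
            - iteratedDeriv 2 f m / 2 * ∑ i, (p i - m * r i) ^ 2 / r i := by
  have : Nonempty (Fin N) := range_nonempty_iff_nonempty.1 hm.nonempty
  have hweight {q : ℝ} (hq : 0 ≤ q) (s : ℝ) (i : Fin N) : 0 < (((i : ℕ) : ℝ) + 1 + q) ^ s := by
    positivity
  obtain rfl : p = _ := funext hp
  obtain rfl : r = _ := funext hr
  exact edmundson_lah_ribaric_three_convex (one_div_mul_sum_one_div_pos (hweight hq₂ s₂))
    (sum_one_div_mul_sum_one_div (hweight hq₁ s₁)) (sum_one_div_mul_sum_one_div (hweight hq₂ s₂))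
    (fun i => hm.2 ⟨i, rfl⟩) (fun i => hM.2 ⟨i, rfl⟩) hmM ham hMb hf hf3

/-- Edmundson–Lah–Ribarič type inequality for the generalized f-divergence of two
Zipf–Mandelbrot laws (Corollary 4.2 of the paper). -/
theorem elr_zipf_mandelbrot_tm3 (N : ℕ) (hN : 1 ≤ N)
    (q₁ q₂ s₁ s₂ : ℝ) (hq₁ : 0 ≤ q₁) (hq₂ : 0 ≤ q₂) (hs₁ : 0 < s₁) (hs₂ : 0 < s₂)
    (p r : Fin N → ℝ)
    (hp : ∀ i : Fin N, p i =
      1 / ((((i : ℕ) : ℝ) + 1 + q₁) ^ s₁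
        * ∑ j : Fin N, 1 / ((((j : ℕ) : ℝ) + 1 + q₁) ^ s₁)))
    (hr : ∀ i : Fin N, r i =
      1 / ((((i : ℕ) : ℝ) + 1 + q₂) ^ s₂
        * ∑ j : Fin N, 1 / ((((j : ℕ) : ℝ) + 1 + q₂) ^ s₂)))
    (m M : ℝ)
    (hm : IsLeast (Set.range fun i : Fin N => p i / r i) m)
    (hM : IsGreatest (Set.range fun i : Fin N => p i / r i) M)
    (hmM : m < M)
    (f : ℝ → ℝ) (a b : ℝ) (ham : a < m) (hMb : M < b)
    (hf : ContDiffOn ℝ 3 f (Set.Ioo a b))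
    (hf3 : ∀ x ∈ Set.Ioo a b, 0 ≤ iteratedDeriv 3 f x) :
    let Δ := (f M - f m) / (M - m)
    (M - 1) * (deriv f M - Δ)
          - iteratedDeriv 2 f M / 2 * ∑ i, (M * r i - p i) ^ 2 / r i
        ≤ (M - 1) / (M - m) * f m + (1 - m) / (M - m) * f M
            - ∑ i, r i * f (p i / r i)
      ∧ (M - 1) / (M - m) * f m + (1 - m) / (M - m) * f M
            - ∑ i, r i * f (p i / r i)
        ≤ (1 - m) * (Δ - deriv f m)
            - iteratedDeriv 2 f m / 2 * ∑ i, (p i - m * r i) ^ 2 / r i :=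
  elr_zipf_mandelbrot_tm3_general N q₁ q₂ s₁ s₂ hq₁ hq₂ p r hp hr m M hm hM hmM f a b ham hMb hf hf3
end
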